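/- arXiv:2406.04154 — 7 statements merged into one kernel-verified Lean document; each statement's English description precedes it below -/
import Mathlib

section
/- Let m ≥ 3, let 0 ≤ f ≤ binom(m,3) be an integer, let h be a positive integer, and let G' be an ordered graph with at least h^{m−2} vertices. Then G' contains a weighted (m,f)-subset or a homogeneous set of size h. -/
/-!
Induction on `m`. If `f ≤ C(m-1,3)`, look for a vertex `v` with at least `h^(m-3)` later
non-neighbours: an `(m-1,f)`-subset among them extends by `v` without changing the weight, and if
there is no such vertex, greedily picking the first remaining vertex builds a clique of size `h`.
Since the weights of a tuple in `G` and in its complement add up to `C(m,3)`, the case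
`f ≥ C(m-1,2) = C(m,3) - C(m-1,3)` is the previous one for the complement. The remaining gap
`C(m-1,3) < f < C(m-1,2)` only contains `(m,f) = (4,2)` and `(5,5)`, both invariant under
complementation. There one looks at the last vertex `w` and the earlier neighbours of `w` (in `G`
or in its complement, whichever set is larger): for `(4,2)` they form a clique, and for `(5,5)`
they induce a graph in which non-adjacent `x < y` agree on every later vertex; such a graph is an
iterated join and disjoint union, so its size is at most the product of its clique and
independence numbers.
-/

open Finset

lemma sum_fin_sub_eq_choose_two (k : ℕ) : ∑ j : Fin k, (k - j.val) = (k + 1).choose 2 := by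
  induction k with
  | zero => simp
  | succ k ih =>
    rw [Fin.sum_univ_succ, Nat.choose_succ_succ', Nat.choose_one_right, ← ih]
    simp

lemma eq_three_two_or_eq_four_five_of_choose_three_lt_of_lt_choose_two {k f : ℕ}
    (h3 : k.choose 3 < f) (h2 : f < k.choose 2) : (k = 3 ∧ f = 2) ∨ (k = 4 ∧ f = 5) := by
  rcases lt_or_ge k 6 with hk | hk
  · interval_cases k <;> simp_all [Nat.choose] <;> omega
  · have : k.choose 2 ≤ k.choose 3 := Nat.choose_le_succ_of_lt_half_left (by omega)
    omega

namespace SimpleGraph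

section Homogeneous

variable {V : Type*} (G : SimpleGraph V)

def HasHomogeneousSubset (S : Finset V) (h : ℕ) : Prop :=
  ∃ T ⊆ S, G.IsNClique h T ∨ G.IsNIndepSet h T

def CardLeCliqueMulIndep (S : Finset V) : Prop :=
  ∃ A ⊆ S, ∃ B ⊆ S, G.IsClique (A : Set V) ∧ G.IsIndepSet (B : Set V) ∧ #S ≤ #A * #B

variable {G}

lemma hasHomogeneousSubset_compl_iff {S : Finset V} {h : ℕ} :
    Gᶜ.HasHomogeneousSubset S h ↔ G.HasHomogeneousSubset S h := by
  simp only [HasHomogeneousSubset, isNClique_compl, isNIndepSet_compl, or_comm]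

lemma HasHomogeneousSubset.mono {S T : Finset V} {h : ℕ} (hTS : T ⊆ S)
    (hT : G.HasHomogeneousSubset T h) : G.HasHomogeneousSubset S h :=
  let ⟨U, hUT, hU⟩ := hT
  ⟨U, hUT.trans hTS, hU⟩

lemma hasHomogeneousSubset_of_isClique {S T : Finset V} {h : ℕ} (hTS : T ⊆ S)
    (hT : G.IsClique (T : Set V)) (hh : h ≤ #T) : G.HasHomogeneousSubset S h := by
  obtain ⟨U, hUT, hU⟩ := exists_subset_card_eq hh
  exact ⟨U, hUT.trans hTS, Or.inl ⟨hT.subset (coe_subset.2 hUT), hU⟩⟩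

lemma hasHomogeneousSubset_of_isIndepSet {S T : Finset V} {h : ℕ} (hTS : T ⊆ S)
    (hT : G.IsIndepSet (T : Set V)) (hh : h ≤ #T) : G.HasHomogeneousSubset S h :=
  hasHomogeneousSubset_compl_iff.1 <|
    hasHomogeneousSubset_of_isClique hTS ((isClique_compl _).2 hT) hh

lemma hasHomogeneousSubset_of_mul_le {S A B : Finset V} {h : ℕ} (hAS : A ⊆ S) (hBS : B ⊆ S)
    (hA : G.IsClique (A : Set V)) (hB : G.IsIndepSet (B : Set V)) (hAB : h * h ≤ #A * #B) :
    G.HasHomogeneousSubset S h := by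
  by_cases hhA : h ≤ #A
  · exact hasHomogeneousSubset_of_isClique hAS hA hhA
  · refine hasHomogeneousSubset_of_isIndepSet hBS hB ?_
    by_contra hhB
    exact (Nat.mul_lt_mul'' (not_le.1 hhA) (not_le.1 hhB)).not_ge hAB

lemma cardLeCliqueMulIndep_compl_iff {S : Finset V} :
    Gᶜ.CardLeCliqueMulIndep S ↔ G.CardLeCliqueMulIndep S := by
  constructor <;>
  · rintro ⟨A, hAS, B, hBS, hA, hB, hcard⟩
    exact ⟨B, hBS, A, hAS, by simpa using hB, by simpa using hA, hcard.trans_eq (mul_comm _ _)⟩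

lemma cardLeCliqueMulIndep_of_card_le_one {S : Finset V} (hS : #S ≤ 1) :
    G.CardLeCliqueMulIndep S := by
  have hsub : (S : Set V).Subsingleton := card_le_one.1 hS
  exact ⟨S, subset_rfl, S, subset_rfl, hsub.pairwise _, hsub.pairwise _, Nat.le_mul_self _⟩

variable [DecidableEq V]

lemma CardLeCliqueMulIndep.union_of_adj {X Y : Finset V} (hXY : Disjoint X Y)
    (hadj : ∀ x ∈ X, ∀ y ∈ Y, G.Adj x y) (hX : G.CardLeCliqueMulIndep X)
    (hY : G.CardLeCliqueMulIndep Y) : G.CardLeCliqueMulIndep (X ∪ Y) := by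
  obtain ⟨A₁, hA₁X, B₁, hB₁X, hA₁, hB₁, hX⟩ := hX
  obtain ⟨A₂, hA₂Y, B₂, hB₂Y, hA₂, hB₂, hY⟩ := hY
  have hA : G.IsClique ((A₁ ∪ A₂ : Finset V) : Set V) := by
    have := G.symm
    rw [coe_union]
    exact Set.pairwise_union_of_symm.2 ⟨hA₁, hA₂, fun x hx y hy _ => hadj x (hA₁X hx) y (hA₂Y hy)⟩
  have hcardA : #(A₁ ∪ A₂) = #A₁ + #A₂ := card_union_of_disjoint (hXY.mono hA₁X hA₂Y)
  rw [CardLeCliqueMulIndep, card_union_of_disjoint hXY]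
  rcases le_total #B₁ #B₂ with hB | hB
  · refine ⟨A₁ ∪ A₂, union_subset_union hA₁X hA₂Y, B₂, hB₂Y.trans subset_union_right, hA, hB₂, ?_⟩
    rw [hcardA]
    nlinarith
  · refine ⟨A₁ ∪ A₂, union_subset_union hA₁X hA₂Y, B₁, hB₁X.trans subset_union_left, hA, hB₁, ?_⟩
    rw [hcardA]
    nlinarith

lemma CardLeCliqueMulIndep.union_of_not_adj {X Y : Finset V} (hXY : Disjoint X Y)
    (hadj : ∀ x ∈ X, ∀ y ∈ Y, ¬G.Adj x y) (hX : G.CardLeCliqueMulIndep X)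
    (hY : G.CardLeCliqueMulIndep Y) : G.CardLeCliqueMulIndep (X ∪ Y) :=
  cardLeCliqueMulIndep_compl_iff.1 <| CardLeCliqueMulIndep.union_of_adj hXY
    (fun x hx y hy => (G.compl_adj x y).2 ⟨fun hxy => Finset.disjoint_left.1 hXY hx (hxy ▸ hy),
      hadj x hx y hy⟩)
    (cardLeCliqueMulIndep_compl_iff.2 hX) (cardLeCliqueMulIndep_compl_iff.2 hY)

variable [DecidableRel G.Adj]

lemma card_insert_filter_adj_add_card_insert_filter_compl_adj {S : Finset V} {w : V} (hw : w ∈ S) :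
    #(insert w {x ∈ S | G.Adj x w}) + #(insert w {x ∈ S | Gᶜ.Adj x w}) = #S + 1 := by
  rw [card_insert_of_notMem (by simp), card_insert_of_notMem (by simp)]
  have hcompl : {x ∈ S | Gᶜ.Adj x w} = {x ∈ S | ¬G.Adj x w}.erase w := by
    ext x
    simp only [mem_filter, mem_erase, compl_adj]
    tauto
  have hsplit := card_filter_add_card_filter_not (s := S) (G.Adj · w)
  have hw' : w ∈ {x ∈ S | ¬G.Adj x w} := mem_filter.2 ⟨hw, G.irrefl⟩
  rw [hcompl, card_erase_of_mem hw']
  have := card_pos.2 ⟨w, hw'⟩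
  omega

end Homogeneous

section Weight

variable {V : Type*} (G : SimpleGraph V) [DecidableRel G.Adj]

/-- For `u = (u₀, …, u_{k-1})` an edge `u_i u_j` with `i < j` has weight `k - j`; with `k = m - 1`
and one-based indices this is the weight `m - j` of the paper. -/
def tupleWeight {k : ℕ} (u : Fin k → V) : ℕ :=
  ∑ i : Fin k, ∑ j : Fin k, if i < j ∧ G.Adj (u i) (u j) then k - j.val else 0

lemma tupleWeight_cons {k : ℕ} (v : V) (u : Fin k → V) :
    G.tupleWeight (Fin.cons v u : Fin (k + 1) → V) =
      (∑ j : Fin k, if G.Adj v (u j) then k - j.val else 0) + G.tupleWeight u := by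
  unfold tupleWeight
  rw [Fin.sum_univ_succ]
  congr 1
  · rw [Fin.sum_univ_succ]
    simp [Fin.succ_pos]
  · refine sum_congr rfl fun i _ => ?_
    rw [Fin.sum_univ_succ]
    simp [Fin.succ_lt_succ_iff]

lemma tupleWeight_add_tupleWeight_compl [DecidableEq V] {k : ℕ} {u : Fin k → V}
    (hu : Function.Injective u) : G.tupleWeight u + Gᶜ.tupleWeight u = (k + 1).choose 3 := by
  induction k with
  | zero => simp [tupleWeight, Nat.choose]
  | succ k ih =>
    cases u using Fin.consCases with
    | cons v u =>
    have hrow : (∑ j : Fin k, if G.Adj v (u j) then k - j.val else 0) +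
        (∑ j : Fin k, if Gᶜ.Adj v (u j) then k - j.val else 0) = (k + 1).choose 2 := by
      rw [← sum_add_distrib, ← sum_fin_sub_eq_choose_two]
      refine sum_congr rfl fun j _ => ?_
      have hne : v ≠ u j := fun h => Fin.succ_ne_zero j (hu (by simpa using h.symm))
      by_cases hadj : G.Adj v (u j) <;> simp [hadj, compl_adj, hne]
    have htail : G.tupleWeight u + Gᶜ.tupleWeight u = (k + 1).choose 3 :=
      ih (hu.comp (Fin.succ_injective _))
    have hpascal : (k + 1 + 1).choose 3 = (k + 1).choose 2 + (k + 1).choose 3 :=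
      Nat.choose_succ_succ' _ _
    rw [tupleWeight_cons, tupleWeight_cons]
    omega

end Weight

section Ordered

variable {V : Type*} [LinearOrder V] (G : SimpleGraph V)

def NonAdjForwardTwins (S : Finset V) : Prop :=
  ∀ x ∈ S, ∀ y ∈ S, ∀ z ∈ S, x < y → y < z → ¬G.Adj x y → (G.Adj x z ↔ G.Adj y z)

variable {G} in
lemma NonAdjForwardTwins.mono {S T : Finset V} (hTS : T ⊆ S) (hS : G.NonAdjForwardTwins S) :
    G.NonAdjForwardTwins T :=
  fun x hx y hy z hz => hS x (hTS hx) y (hTS hy) z (hTS hz)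

variable [DecidableRel G.Adj]

def HasWeightedSubset (S : Finset V) (k f : ℕ) : Prop :=
  ∃ u : Fin k → V, StrictMono u ∧ (∀ i, u i ∈ S) ∧ G.tupleWeight u = f

variable {G}

lemma hasWeightedSubset_compl_iff {S : Finset V} {k f : ℕ} (hf : f ≤ (k + 1).choose 3) :
    Gᶜ.HasWeightedSubset S k ((k + 1).choose 3 - f) ↔ G.HasWeightedSubset S k f := by
  refine exists_congr fun u => and_congr_right fun hu => and_congr_right fun _ => ?_
  have := G.tupleWeight_add_tupleWeight_compl hu.injective
  omega

lemma HasWeightedSubset.cons {S : Finset V} {v : V} (hv : v ∈ S) {k f : ℕ}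
    (hu : G.HasWeightedSubset {w ∈ S | v < w ∧ ¬G.Adj v w} k f) :
    G.HasWeightedSubset S (k + 1) f := by
  obtain ⟨u, hu, huS, rfl⟩ := hu
  have hlater (i : Fin k) : v < u i ∧ ¬G.Adj v (u i) := (mem_filter.1 (huS i)).2
  refine ⟨Fin.cons v u, ?_, fun i => Fin.cases hv (fun i => (mem_filter.1 (huS i)).1) i, ?_⟩
  · exact Fin.strictMono_cons.2 ⟨fun i => (hlater i).1, hu⟩
  · rw [tupleWeight_cons, sum_eq_zero fun j _ => if_neg (hlater j).2, zero_add]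

lemma hasWeightedSubset_three {S : Finset V} {x y z : V} (hx : x ∈ S) (hy : y ∈ S) (hz : z ∈ S)
    (hxy : x < y) (hyz : y < z) :
    G.HasWeightedSubset S 3 ((if G.Adj x y then 2 else 0) + (if G.Adj x z then 1 else 0) +
      (if G.Adj y z then 1 else 0)) := by
  refine ⟨![x, y, z], by simp [strictMono_vecCons, hxy, hyz],
    by simp [Fin.forall_fin_succ, hx, hy, hz], ?_⟩
  unfold tupleWeight
  simp [Fin.sum_univ_three]

lemma hasWeightedSubset_four {S : Finset V} {x y z w : V} (hx : x ∈ S) (hy : y ∈ S) (hz : z ∈ S)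
    (hw : w ∈ S) (hxy : x < y) (hyz : y < z) (hzw : z < w) :
    G.HasWeightedSubset S 4 ((if G.Adj x y then 3 else 0) + (if G.Adj x z then 2 else 0) +
      (if G.Adj y z then 2 else 0) + (if G.Adj x w then 1 else 0) +
      (if G.Adj y w then 1 else 0) + (if G.Adj z w then 1 else 0)) := by
  refine ⟨![x, y, z, w], by simp [strictMono_vecCons, hxy, hyz, hzw],
    by simp [Fin.forall_fin_succ, hx, hy, hz, hw], ?_⟩
  unfold tupleWeight
  simp [Fin.sum_univ_four]
  ring

lemma exists_isNClique_of_card_filter_not_adj_lt {S : Finset V} {t : ℕ} (ht : 0 < t)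
    (hS : ∀ v ∈ S, #{w ∈ S | v < w ∧ ¬G.Adj v w} < t) (n : ℕ) (hn : n * t ≤ #S) :
    ∃ C ⊆ S, G.IsNClique n C := by
  induction n generalizing S with
  | zero => exact ⟨∅, empty_subset _, by simp⟩
  | succ n ih =>
    obtain ⟨v, hv, hmin⟩ := S.exists_min_image id (card_pos.1 (by nlinarith))
    set P := {w ∈ S | v < w ∧ G.Adj v w}
    have hsplit : #S ≤ #P + #{w ∈ S | v < w ∧ ¬G.Adj v w} + 1 := by
      calc #S ≤ #(insert v (P ∪ {w ∈ S | v < w ∧ ¬G.Adj v w})) := card_le_card fun w hw => by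
              obtain rfl | hvw := eq_or_ne v w
              · exact mem_insert_self _ _
              have hlt : v < w := (hmin w hw).lt_of_ne hvw
              by_cases hadj : G.Adj v w <;> simp [P, hw, hlt, hadj]
        _ ≤ _ := (card_insert_le _ _).trans (Nat.succ_le_succ (card_union_le _ _))
    have hPS : P ⊆ S := filter_subset _ _
    obtain ⟨C, hCP, hC⟩ := ih (S := P)
      (fun u hu => (card_le_card (filter_subset_filter _ hPS)).trans_lt (hS u (hPS hu)))
      (by have := hS v hv; rw [add_mul, one_mul] at hn; omega)
    exact ⟨insert v C, insert_subset hv (hCP.trans hPS),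
      hC.insert fun w hw => (mem_filter.1 (hCP hw)).2.2⟩

lemma hasWeightedSubset_succ_or_hasHomogeneousSubset {k f h : ℕ} (hh : 0 < h)
    {S : Finset V} (hS : h ^ (k + 1) ≤ #S)
    (ih : ∀ T : Finset V, h ^ k ≤ #T →
      G.HasWeightedSubset T (k + 1) f ∨ G.HasHomogeneousSubset T h) :
    G.HasWeightedSubset S (k + 2) f ∨ G.HasHomogeneousSubset S h := by
  by_cases hlater : ∃ v ∈ S, h ^ k ≤ #{w ∈ S | v < w ∧ ¬G.Adj v w}
  · obtain ⟨v, hv, hP⟩ := hlater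
    exact (ih _ hP).imp (HasWeightedSubset.cons hv) (HasHomogeneousSubset.mono (filter_subset _ _))
  · push Not at hlater
    obtain ⟨C, hCS, hC⟩ := G.exists_isNClique_of_card_filter_not_adj_lt (pow_pos hh k) hlater h
      (by rwa [pow_succ, mul_comm] at hS)
    exact Or.inr ⟨C, hCS, Or.inl hC⟩

/-- Removing the last vertex `z`, the vertices adjacent to `z` are joined to all the others, so
the graph splits as a join or (if `z` is isolated) a disjoint union. -/
theorem NonAdjForwardTwins.cardLeCliqueMulIndep {S : Finset V} (hS : G.NonAdjForwardTwins S) :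
    G.CardLeCliqueMulIndep S := by
  induction S using Finset.strongInduction with
  | H S ih =>
  rcases le_or_gt #S 1 with hle | hlt
  · exact cardLeCliqueMulIndep_of_card_le_one hle
  obtain ⟨z, hz, hmax⟩ := S.exists_max_image id (card_pos.1 (by omega))
  by_cases hA : {x ∈ S | G.Adj x z}.Nonempty
  · obtain ⟨a, ha⟩ := hA
    have hjoin : ∀ x ∈ {x ∈ S | G.Adj x z}, ∀ y ∈ {x ∈ S | ¬G.Adj x z}, G.Adj x y := by
      simp only [mem_filter]
      rintro x ⟨hx, hxz⟩ y ⟨hy, hyz⟩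
      rcases (hmax y hy).lt_or_eq with hyz' | rfl
      · have hxz' : x < z := (hmax x hx).lt_of_ne hxz.ne
        by_contra hxy
        rcases (show x ≠ y by rintro rfl; exact hyz hxz).lt_or_gt with hlt | hlt
        · exact hyz ((hS x hx y hy z hz hlt hyz' hxy).1 hxz)
        · exact hyz ((hS y hy x hx z hz hlt hxz' (fun h => hxy h.symm)).2 hxz)
      · exact hxz
    rw [← filter_union_filter_not_eq (G.Adj · z) S]
    exact .union_of_adj (disjoint_filter_filter_not _ _ _) hjoin
      (ih _ (filter_ssubset.2 ⟨z, hz, G.irrefl⟩) (hS.mono (filter_subset _ _)))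
      (ih _ (filter_ssubset.2 ⟨a, (mem_filter.1 ha).1, not_not.2 (mem_filter.1 ha).2⟩)
        (hS.mono (filter_subset _ _)))
  · rw [← insert_erase hz, insert_eq, union_comm]
    refine .union_of_not_adj (disjoint_singleton_right.2 (S.notMem_erase z)) ?_
      (ih _ (erase_ssubset hz) (hS.mono (erase_subset _ _)))
      (cardLeCliqueMulIndep_of_card_le_one (card_singleton z).le)
    intro x hx y hy hxy
    rw [mem_singleton.1 hy] at hxy
    exact hA ⟨x, mem_filter.2 ⟨mem_of_mem_erase hx, hxy⟩⟩

lemma isClique_insert_filter_adj_of_not_hasWeightedSubset_three_two {S : Finset V} {w : V}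
    (hw : w ∈ S) (hmax : ∀ x ∈ S, x ≤ w) (hno : ¬G.HasWeightedSubset S 3 2) :
    G.IsClique ((insert w {x ∈ S | G.Adj x w} : Finset V) : Set V) := by
  rw [coe_insert, isClique_insert]
  refine ⟨?_, fun y hy _ => (mem_filter.1 hy).2.symm⟩
  intro x hx y hy hne
  wlog hxy : x < y generalizing x y
  · exact (this hy hx hne.symm (hne.lt_or_gt.resolve_left hxy)).symm
  obtain ⟨hxS, hxw⟩ := mem_filter.1 hx
  obtain ⟨hyS, hyw⟩ := mem_filter.1 hy
  by_contra hnxy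
  have := G.hasWeightedSubset_three hxS hyS hw hxy ((hmax y hyS).lt_of_ne hyw.ne)
  rw [if_neg hnxy, if_pos hxw, if_pos hyw] at this
  exact hno this

lemma nonAdjForwardTwins_insert_filter_adj_of_not_hasWeightedSubset_four_five {S : Finset V}
    {w : V} (hw : w ∈ S) (hmax : ∀ x ∈ S, x ≤ w) (hno : ¬G.HasWeightedSubset S 4 5) :
    G.NonAdjForwardTwins (insert w {x ∈ S | G.Adj x w}) := by
  have hmem : ∀ u ∈ insert w {x ∈ S | G.Adj x w}, u ∈ S ∧ (u < w → G.Adj u w) := by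
    simp only [mem_insert, mem_filter]
    rintro u (rfl | ⟨hu, hadj⟩)
    · exact ⟨hw, fun h => absurd h (lt_irrefl u)⟩
    · exact ⟨hu, fun _ => hadj⟩
  intro x hx y hy z hz hxy hyz hnxy
  obtain ⟨hxS, hxw⟩ := hmem x hx
  obtain ⟨hyS, hyw⟩ := hmem y hy
  obtain ⟨hzS, hzw⟩ := hmem z hz
  have hyw' : y < w := hyz.trans_le (hmax z hzS)
  rcases (hmax z hzS).lt_or_eq with hzw' | rfl
  · by_contra hiff
    refine hno ?_
    convert G.hasWeightedSubset_four hxS hyS hzS hw hxy hyz hzw' using 1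
    by_cases hxz : G.Adj x z <;> by_cases hyz' : G.Adj y z <;>
      simp [hnxy, hxz, hyz', hxw (hxy.trans hyw'), hyw hyw', hzw hzw'] at hiff ⊢
  · exact iff_of_true (hxw (hxy.trans hyw')) (hyw hyw')

lemma hasHomogeneousSubset_of_not_hasWeightedSubset_three_two {S : Finset V} {h : ℕ} (hh : 0 < h)
    (hS : h ^ 2 ≤ #S) (hno : ¬G.HasWeightedSubset S 3 2) : G.HasHomogeneousSubset S h := by
  obtain ⟨w, hw, hmax⟩ := S.exists_max_image id (card_pos.1 ((pow_pos hh 2).trans_le hS))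
  have hnoc : ¬Gᶜ.HasWeightedSubset S 3 2 := (hasWeightedSubset_compl_iff (by decide)).not.2 hno
  have hcard := G.card_insert_filter_adj_add_card_insert_filter_compl_adj hw
  have hNS {H : SimpleGraph V} [DecidableRel H.Adj] : insert w {x ∈ S | H.Adj x w} ⊆ S :=
    insert_subset hw (filter_subset _ _)
  rcases (show h ≤ #(insert w {x ∈ S | G.Adj x w}) ∨ h ≤ #(insert w {x ∈ S | Gᶜ.Adj x w}) by
    by_contra! hlt; nlinarith) with hN | hN
  · exact hasHomogeneousSubset_of_isClique hNS
      (G.isClique_insert_filter_adj_of_not_hasWeightedSubset_three_two hw hmax hno) hN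
  · exact hasHomogeneousSubset_compl_iff.1 <| hasHomogeneousSubset_of_isClique hNS
      (Gᶜ.isClique_insert_filter_adj_of_not_hasWeightedSubset_three_two hw hmax hnoc) hN

lemma hasHomogeneousSubset_of_not_hasWeightedSubset_four_five {S : Finset V} {h : ℕ} (hh : 0 < h)
    (hS : h ^ 3 ≤ #S) (hno : ¬G.HasWeightedSubset S 4 5) : G.HasHomogeneousSubset S h := by
  obtain ⟨w, hw, hmax⟩ := S.exists_max_image id (card_pos.1 ((pow_pos hh 3).trans_le hS))
  have hnoc : ¬Gᶜ.HasWeightedSubset S 4 5 := (hasWeightedSubset_compl_iff (by decide)).not.2 hno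
  have hcard := G.card_insert_filter_adj_add_card_insert_filter_compl_adj hw
  have hbig {H : SimpleGraph V} [DecidableRel H.Adj] (hno : ¬H.HasWeightedSubset S 4 5)
      (hN : h * h ≤ #(insert w {x ∈ S | H.Adj x w})) : H.HasHomogeneousSubset S h := by
    obtain ⟨A, hAN, B, hBN, hA, hB, hAB⟩ :=
      (H.nonAdjForwardTwins_insert_filter_adj_of_not_hasWeightedSubset_four_five hw hmax
        hno).cardLeCliqueMulIndep
    have hNS : insert w {x ∈ S | H.Adj x w} ⊆ S := insert_subset hw (filter_subset _ _)
    exact hasHomogeneousSubset_of_mul_le (hAN.trans hNS) (hBN.trans hNS) hA hB (hN.trans hAB)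
  have hcube : 2 * (h * h) ≤ h ^ 3 + 1 := by
    rcases Nat.lt_or_ge h 2 with h1 | h2
    · interval_cases h; norm_num
    · nlinarith
  rcases (show h * h ≤ #(insert w {x ∈ S | G.Adj x w}) ∨
      h * h ≤ #(insert w {x ∈ S | Gᶜ.Adj x w}) by omega) with hN | hN
  · exact hbig hno hN
  · exact hasHomogeneousSubset_compl_iff.1 (hbig hnoc hN)

variable (G) in
theorem hasWeightedSubset_or_hasHomogeneousSubset {h : ℕ} (hh : 0 < h) (k : ℕ) (S : Finset V)
    (f : ℕ) (hf : f ≤ (k + 2).choose 3) (hS : h ^ k ≤ #S) :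
    G.HasWeightedSubset S (k + 1) f ∨ G.HasHomogeneousSubset S h := by
  induction k generalizing G S f with
  | zero =>
    obtain ⟨v, hv⟩ : S.Nonempty := card_pos.1 (by simpa using hS)
    obtain rfl : f = 0 := Nat.le_zero.1 hf
    exact Or.inl
      ⟨fun _ => v, Subsingleton.strictMono (α := Fin 1) _, fun _ => hv, by simp [tupleWeight]⟩
  | succ k ih =>
    have hpascal : (k + 3).choose 3 = (k + 2).choose 2 + (k + 2).choose 3 :=
      Nat.choose_succ_succ' _ _
    replace hf : f ≤ (k + 3).choose 3 := hf
    by_cases hlow : f ≤ (k + 2).choose 3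
    · exact hasWeightedSubset_succ_or_hasHomogeneousSubset hh hS fun T hT => ih G T f hlow hT
    by_cases hhigh : (k + 2).choose 2 ≤ f
    · rw [← hasWeightedSubset_compl_iff hf, ← hasHomogeneousSubset_compl_iff]
      exact hasWeightedSubset_succ_or_hasHomogeneousSubset hh hS
        fun T hT => ih Gᶜ T ((k + 3).choose 3 - f) (by omega) hT
    refine or_iff_not_imp_left.2 ?_
    obtain ⟨hk, rfl⟩ | ⟨hk, rfl⟩ :=
      eq_three_two_or_eq_four_five_of_choose_three_lt_of_lt_choose_two (k := k + 2) (f := f)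
        (by omega) (by omega)
    · obtain rfl : k = 1 := by omega
      exact G.hasHomogeneousSubset_of_not_hasWeightedSubset_three_two hh hS
    · obtain rfl : k = 2 := by omega
      exact G.hasHomogeneousSubset_of_not_hasWeightedSubset_four_five hh hS

end Ordered

end SimpleGraph

theorem stmt5 (m : ℕ) (hm : 3 ≤ m) (f : ℕ) (hf : f ≤ Nat.choose m 3) (h : ℕ) (hh : 0 < h)
    (V : Type) [Fintype V] [LinearOrder V] (G : SimpleGraph V) [DecidableRel G.Adj]
    (hcard : h ^ (m - 2) ≤ Fintype.card V) :
    (∃ u : Fin (m - 1) → V, StrictMono u ∧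
      (∑ i : Fin (m - 1), ∑ j : Fin (m - 1),
        if i < j ∧ G.Adj (u i) (u j) then m - (j.val + 1) else 0) = f) ∨
    (∃ S : Finset V, S.card = h ∧
      ((∀ x ∈ S, ∀ y ∈ S, x ≠ y → G.Adj x y) ∨ (∀ x ∈ S, ∀ y ∈ S, ¬ G.Adj x y))) := by
  obtain ⟨k, rfl⟩ : ∃ k, m = k + 2 := ⟨m - 2, by omega⟩
  rcases G.hasWeightedSubset_or_hasHomogeneousSubset hh k univ f hf (by simpa using hcard) with
    ⟨u, hu, -, hweight⟩ | ⟨S, -, hS | hS⟩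
  · refine Or.inl ⟨u, hu, hweight ▸ sum_congr rfl fun i _ => sum_congr rfl fun j _ => ?_⟩
    rw [show k + 2 - (j.val + 1) = k + 1 - j.val by omega]
  · exact Or.inr ⟨S, hS.card_eq, Or.inl hS.isClique⟩
  · refine Or.inr ⟨S, hS.card_eq, Or.inr fun x hx y hy => ?_⟩
    obtain rfl | hxy := eq_or_ne x y
    · exact G.irrefl
    · exact hS.isIndepSet hx hy hxy
end

section
/- There is a constant C > 0 such that for every positive integer m, the function f(a₁,...,a_m,b₁,...,b_m) = (a₁ + ... + a_m)·Σ_{1≤i<j≤m} b_i b_j + (b₁ + ... + b_m)·Σ_{1≤i<j≤m} a_i a_j takes at least C·m³ distinct values on the set of integer vectors (a₁,...,a_m,b₁,...,b_m) with a_i, b_i ≥ 0 for all i and Σ_{i=1}^m (a_i + b_i) = m. -/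
namespace Stmt9Aux

def Tri : ℕ → ℕ
  | 0 => 0
  | n+1 => Tri n + n

lemma two_tri (t : ℕ) : 2 * Tri t + t = t * t := by
  induction t with
  | zero => rfl
  | succ n ih => simp only [Tri]; nlinarith [ih]

lemma tri_ge (q : ℕ) (h : 8 ≤ q) : 3 * q + 2 ≤ Tri q := by
  induction q with
  | zero => omega
  | succ n ih =>
    rcases Nat.lt_or_ge n 8 with h8 | h8
    · interval_cases n <;> simp [Tri] <;> omega
    · have := ih (by omega)
      simp only [Tri]; omega

lemma tri_cover : ∀ T, 1 ≤ T → ∀ β ≤ Tri T, ∃ t j, 1 ≤ t ∧ t ≤ T ∧ j < t ∧ β = Tri t + j := by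
  intro T
  induction T with
  | zero => omega
  | succ n ih =>
    intro _ β hβ
    rcases Nat.lt_or_ge n 1 with h1 | h1
    · have hn : n = 0 := by omega
      subst hn
      have : β = 0 := by simpa [Tri] using hβ
      exact ⟨1, 0, by omega, by omega, by omega, by simp [this, Tri]⟩
    · rcases le_or_gt β (Tri n) with h | h
      · obtain ⟨t, j, ht1, ht2, hj, he⟩ := ih h1 β h
        exact ⟨t, j, ht1, by omega, hj, he⟩
      · have hβ' : β ≤ Tri n + n := by simpa [Tri] using hβ
        rcases Nat.lt_or_ge β (Tri n + n) with hlt | hge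
        · exact ⟨n, β - Tri n, h1, by omega, by omega, by omega⟩
        · exact ⟨n + 1, 0, by omega, le_rfl, by omega, by simp [Tri]; omega⟩

lemma sum_piece (m j k c₁ c₂ c₃ : ℕ) (h : 1 + j + k ≤ m) :
    ∑ i : Fin m, (if (i : ℕ) = 0 then c₁ else if (i : ℕ) < 1 + j then c₂
      else if (i : ℕ) < 1 + j + k then c₃ else 0) = c₁ + j * c₂ + k * c₃ := by
  rw [Fin.sum_univ_eq_sum_range (fun i => if i = 0 then c₁ else if i < 1 + j then c₂
      else if i < 1 + j + k then c₃ else 0) m]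
  rw [Finset.range_eq_Ico,
    ← Finset.sum_Ico_consecutive _ (by omega : 0 ≤ 1 + j + k) (by omega : 1 + j + k ≤ m),
    ← Finset.sum_Ico_consecutive _ (by omega : 0 ≤ 1 + j) (by omega : 1 + j ≤ 1 + j + k),
    ← Finset.sum_Ico_consecutive _ (by omega : 0 ≤ 1) (by omega : 1 ≤ 1 + j)]
  have h1 : ∑ i ∈ Finset.Ico 0 1, (if i = 0 then c₁ else if i < 1 + j then c₂
      else if i < 1 + j + k then c₃ else 0) = c₁ := by simp
  have h2 : ∑ i ∈ Finset.Ico 1 (1 + j), (if i = 0 then c₁ else if i < 1 + j then c₂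
      else if i < 1 + j + k then c₃ else 0) = j * c₂ := by
    have hc : ∀ i ∈ Finset.Ico 1 (1 + j), (if i = 0 then c₁ else if i < 1 + j then c₂
        else if i < 1 + j + k then c₃ else 0) = c₂ := by
      intro i hi
      simp only [Finset.mem_Ico] at hi
      rw [if_neg (by omega), if_pos (by omega)]
    rw [Finset.sum_congr rfl hc, Finset.sum_const, Nat.card_Ico, smul_eq_mul]
    congr 1
    omega
  have h3 : ∑ i ∈ Finset.Ico (1 + j) (1 + j + k), (if i = 0 then c₁ else if i < 1 + j then c₂
      else if i < 1 + j + k then c₃ else 0) = k * c₃ := by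
    have hc : ∀ i ∈ Finset.Ico (1 + j) (1 + j + k), (if i = 0 then c₁ else if i < 1 + j then c₂
        else if i < 1 + j + k then c₃ else 0) = c₃ := by
      intro i hi
      simp only [Finset.mem_Ico] at hi
      rw [if_neg (by omega), if_neg (by omega), if_pos (by omega)]
    rw [Finset.sum_congr rfl hc, Finset.sum_const, Nat.card_Ico, smul_eq_mul]
    congr 1
    omega
  have h4 : ∑ i ∈ Finset.Ico (1 + j + k) m, (if i = 0 then c₁ else if i < 1 + j then c₂
      else if i < 1 + j + k then c₃ else 0) = 0 := by
    have hc : ∀ i ∈ Finset.Ico (1 + j + k) m, (if i = 0 then c₁ else if i < 1 + j then c₂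
        else if i < 1 + j + k then c₃ else 0) = 0 := by
      intro i hi
      simp only [Finset.mem_Ico] at hi
      rw [if_neg (by omega), if_neg (by omega), if_neg (by omega)]
    rw [Finset.sum_congr rfl hc, Finset.sum_const, smul_eq_mul, Nat.mul_zero]
  omega

lemma e2_identity (m : ℕ) (v : Fin m → ℕ) :
    2 * (∑ i : Fin m, ∑ j : Fin m, if i < j then v i * v j else 0) + ∑ i : Fin m, v i * v i
      = (∑ i : Fin m, v i) * (∑ i : Fin m, v i) := by
  rw [Finset.sum_mul_sum]
  have key : ∀ i j : Fin m, v i * v j =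
      (if i < j then v i * v j else 0) + ((if j < i then v i * v j else 0)
        + (if i = j then v i * v j else 0)) := by
    intro i j
    rcases lt_trichotomy i j with h | h | h
    · rw [if_pos h, if_neg (by omega), if_neg (by exact fun he => absurd he (ne_of_lt h))]
      ring
    · simp [h, lt_irrefl]
    · rw [if_neg (by omega), if_pos h, if_neg (by exact fun he => absurd he (ne_of_gt h))]
      ring
  calc 2 * (∑ i : Fin m, ∑ j : Fin m, if i < j then v i * v j else 0)
        + ∑ i : Fin m, v i * v i
      = (∑ i : Fin m, ∑ j : Fin m, if i < j then v i * v j else 0)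
        + ((∑ i : Fin m, ∑ j : Fin m, if j < i then v i * v j else 0)
        + (∑ i : Fin m, ∑ j : Fin m, if i = j then v i * v j else 0)) := by
        have hsym : (∑ i : Fin m, ∑ j : Fin m, if j < i then v i * v j else 0)
            = ∑ i : Fin m, ∑ j : Fin m, if i < j then v i * v j else 0 := by
          rw [Finset.sum_comm]
          refine Finset.sum_congr rfl fun i _ => Finset.sum_congr rfl fun j _ => ?_
          rw [mul_comm]
        have hdiag : (∑ i : Fin m, ∑ j : Fin m, if i = j then v i * v j else 0)
            = ∑ i : Fin m, v i * v i := by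
          refine Finset.sum_congr rfl fun i _ => ?_
          simp
        rw [hsym, hdiag]; ring
    _ = ∑ i : Fin m, ∑ j : Fin m, v i * v j := by
        rw [← Finset.sum_add_distrib, ← Finset.sum_add_distrib]
        refine Finset.sum_congr rfl fun i _ => ?_
        rw [← Finset.sum_add_distrib, ← Finset.sum_add_distrib]
        exact Finset.sum_congr rfl fun j _ => (key i j).symm

def vec (m t j k : ℕ) : Fin m → ℕ := fun i =>
  if (i : ℕ) = 0 then t else if (i : ℕ) < 1 + j then 2
    else if (i : ℕ) < 1 + j + k then 1 else 0

lemma vec_sum (m t j k : ℕ) (h : 1 + j + k ≤ m) :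
    ∑ i : Fin m, vec m t j k i = t + 2 * j + k := by
  unfold vec
  rw [sum_piece m j k t 2 1 h]
  ring

lemma vec_sq_sum (m t j k : ℕ) (h : 1 + j + k ≤ m) :
    ∑ i : Fin m, vec m t j k i * vec m t j k i = t * t + 4 * j + k := by
  have hpt : ∀ i : Fin m, vec m t j k i * vec m t j k i
      = (if (i : ℕ) = 0 then t * t else if (i : ℕ) < 1 + j then 4
          else if (i : ℕ) < 1 + j + k then 1 else 0) := by
    intro i
    unfold vec
    split_ifs <;> norm_num
  rw [Finset.sum_congr rfl (fun i _ => hpt i), sum_piece m j k (t * t) 4 1 h]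
  ring

lemma build (m A B α β : ℕ) (hAB : A + B = m) (hA1 : 1 ≤ A / 3) (hB1 : 1 ≤ B / 3)
    (hα : α ≤ Tri (A / 3)) (hβ : β ≤ Tri (B / 3)) :
    ∃ a b : Fin m → ℕ, (∑ i : Fin m, (a i + b i)) = m ∧
      2 * ((∑ i : Fin m, a i) * (∑ i : Fin m, ∑ j : Fin m, if i < j then b i * b j else 0)
         + (∑ i : Fin m, b i) * (∑ i : Fin m, ∑ j : Fin m, if i < j then a i * a j else 0))
        + 2 * (A * β + B * α) + 2 * (A * B) = A * (B * B) + B * (A * A) := by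
  obtain ⟨t₁, j₁, ht₁1, ht₁2, hj₁, hα'⟩ := tri_cover (A / 3) hA1 α hα
  obtain ⟨t₂, j₂, ht₂1, ht₂2, hj₂, hβ'⟩ := tri_cover (B / 3) hB1 β hβ
  have hA3 : 3 * (A / 3) ≤ A := by omega
  have hB3 : 3 * (B / 3) ≤ B := by omega
  have hta : t₁ + 2 * j₁ ≤ A := by omega
  have htb : t₂ + 2 * j₂ ≤ B := by omega
  set k₁ := A - (t₁ + 2 * j₁) with hk₁
  set k₂ := B - (t₂ + 2 * j₂) with hk₂
  have hfa : 1 + j₁ + k₁ ≤ m := by omega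
  have hfb : 1 + j₂ + k₂ ≤ m := by omega
  set a := vec m t₁ j₁ k₁ with ha
  set b := vec m t₂ j₂ k₂ with hb
  have hsa : ∑ i : Fin m, a i = A := by rw [ha, vec_sum m t₁ j₁ k₁ hfa]; omega
  have hsb : ∑ i : Fin m, b i = B := by rw [hb, vec_sum m t₂ j₂ k₂ hfb]; omega
  have hqa : ∑ i : Fin m, a i * a i = 2 * α + A := by
    rw [ha, vec_sq_sum m t₁ j₁ k₁ hfa]
    have := two_tri t₁
    omega
  have hqb : ∑ i : Fin m, b i * b i = 2 * β + B := by
    rw [hb, vec_sq_sum m t₂ j₂ k₂ hfb]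
    have := two_tri t₂
    omega
  refine ⟨a, b, ?_, ?_⟩
  · rw [Finset.sum_add_distrib, hsa, hsb, hAB]
  · have idA := e2_identity m a
    have idB := e2_identity m b
    rw [hsa, hqa] at idA
    rw [hsb, hqb] at idB
    rw [hsa, hsb]
    set e2a := ∑ i : Fin m, ∑ j : Fin m, if i < j then a i * a j else 0
    set e2b := ∑ i : Fin m, ∑ j : Fin m, if i < j then b i * b j else 0
    zify at idA idB ⊢
    linear_combination (A : ℤ) * idB + (B : ℤ) * idA

lemma exists_A (m : ℕ) (hm : 100 ≤ m) :
    ∃ A, 2 * A ≤ m ∧ m ≤ 2 * A + 4 ∧ Nat.Coprime A (m - A) := by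
  rcases Nat.even_or_odd m with he | ho
  · obtain ⟨c, hc⟩ := he
    rcases Nat.even_or_odd c with hce | hco
    · refine ⟨c - 1, by omega, by omega, ?_⟩
      have h1 : m - (c - 1) = 2 + (c - 1) := by omega
      rw [h1, Nat.coprime_add_self_right, Nat.coprime_two_right]
      obtain ⟨d, hd⟩ := hce
      exact ⟨d - 1, by omega⟩
    · refine ⟨c - 2, by omega, by omega, ?_⟩
      have h1 : m - (c - 2) = 4 + (c - 2) := by omega
      rw [h1, Nat.coprime_add_self_right]
      have h4 : (4 : ℕ) = 2 ^ 2 := by norm_num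
      rw [h4]
      refine Nat.Coprime.pow_right _ ?_
      rw [Nat.coprime_two_right]
      obtain ⟨d, hd⟩ := hco
      exact ⟨d - 1, by omega⟩
  · obtain ⟨c, hc⟩ := ho
    refine ⟨c, by omega, by omega, ?_⟩
    have h1 : m - c = 1 + c := by omega
    rw [h1, Nat.coprime_add_self_right]
    exact Nat.coprime_one_right c

end Stmt9Aux

open Stmt9Aux in
theorem stmt9 :
    ∃ C : ℝ, 0 < C ∧
      ∀ m : ℕ, 0 < m →
        C * (m : ℝ) ^ 3 ≤
          (Set.ncard ((fun p : (Fin m → ℕ) × (Fin m → ℕ) =>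
              (∑ i : Fin m, p.1 i) *
                (∑ i : Fin m, ∑ j : Fin m, if i < j then p.2 i * p.2 j else 0)
            + (∑ i : Fin m, p.2 i) *
                (∑ i : Fin m, ∑ j : Fin m, if i < j then p.1 i * p.1 j else 0)) ''
            {p : (Fin m → ℕ) × (Fin m → ℕ) | ∑ i : Fin m, (p.1 i + p.2 i) = m}) : ℝ) := by
  refine ⟨(1000000 : ℝ)⁻¹, by norm_num, ?_⟩
  intro m hm
  set fm := (fun p : (Fin m → ℕ) × (Fin m → ℕ) =>
      (∑ i : Fin m, p.1 i) *
        (∑ i : Fin m, ∑ j : Fin m, if i < j then p.2 i * p.2 j else 0)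
    + (∑ i : Fin m, p.2 i) *
        (∑ i : Fin m, ∑ j : Fin m, if i < j then p.1 i * p.1 j else 0)) with hfm
  set D := {p : (Fin m → ℕ) × (Fin m → ℕ) | ∑ i : Fin m, (p.1 i + p.2 i) = m} with hD
  set S := fm '' D with hS
  -- D is finite
  have hDfin : D.Finite := by
    apply Set.Finite.subset (Set.Finite.prod
      (Set.Finite.pi (fun _ : Fin m => Set.finite_Iic m))
      (Set.Finite.pi (fun _ : Fin m => Set.finite_Iic m)))
    rintro ⟨a, b⟩ hp
    simp only [hD, Set.mem_setOf_eq] at hp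
    constructor
    · intro i _
      simp only [Set.mem_Iic]
      calc a i ≤ a i + b i := Nat.le_add_right _ _
        _ ≤ ∑ i : Fin m, (a i + b i) :=
            Finset.single_le_sum (f := fun i => a i + b i) (fun i _ => Nat.zero_le _) (Finset.mem_univ i)
        _ = m := hp
    · intro i _
      simp only [Set.mem_Iic]
      calc b i ≤ a i + b i := Nat.le_add_left _ _
        _ ≤ ∑ i : Fin m, (a i + b i) :=
            Finset.single_le_sum (f := fun i => a i + b i) (fun i _ => Nat.zero_le _) (Finset.mem_univ i)
        _ = m := hp
  have hSfin : S.Finite := hDfin.image _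
  -- S is nonempty
  have hSne : S.Nonempty := by
    refine ⟨fm (vec m m 0 0, fun _ => 0), Set.mem_image_of_mem _ ?_⟩
    simp only [hD, Set.mem_setOf_eq]
    have : ∑ i : Fin m, (vec m m 0 0 i + 0) = ∑ i : Fin m, vec m m 0 0 i := by
      refine Finset.sum_congr rfl fun i _ => by omega
    rw [this, vec_sum m m 0 0 (by omega)]
    omega
  rcases Nat.lt_or_ge m 100 with hsmall | hbig
  · -- small case
    have h1 : 1 ≤ S.ncard := (Set.ncard_pos hSfin).mpr hSne
    have h2 : (m : ℝ) ≤ 99 := by exact_mod_cast Nat.le_of_lt_succ hsmall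
    have h3 : (1 : ℝ) ≤ (S.ncard : ℝ) := by exact_mod_cast h1
    have hmpos : (0:ℝ) ≤ (m:ℝ) := by positivity
    nlinarith [pow_le_pow_left₀ hmpos h2 3]
  · -- main case
    obtain ⟨A, hA1, hA2, hcop⟩ := exists_A m hbig
    set B := m - A with hBdef
    have hAB : A + B = m := by omega
    have hA48 : 48 ≤ A := by omega
    have hBA : A ≤ B := by omega
    have hB50 : 50 ≤ B := by omega
    set qa := A / 3 with hqa
    set qb := B / 3 with hqb
    have hqa16 : 16 ≤ qa := by omega
    have hqb16 : 16 ≤ qb := by omega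
    have htga := tri_ge qa (by omega)
    have htgb := tri_ge qb (by omega)
    set K := Tri qb with hK
    set P : Finset (ℕ × ℕ) := Finset.range A ×ˢ Finset.range (K + 1) with hP
    have hval : ∀ q : ℕ × ℕ, ∃ y, q ∈ P → y ∈ S ∧
        2 * y + 2 * (A * q.2 + B * q.1) + 2 * (A * B) = A * (B * B) + B * (A * A) := by
      intro q
      by_cases hq : q ∈ P
      · simp only [hP, Finset.mem_product, Finset.mem_range] at hq
        have hα : q.1 ≤ Tri qa := by omega
        have hβ : q.2 ≤ Tri qb := by omega
        obtain ⟨a, b, hmem, heq⟩ := build m A B q.1 q.2 hAB (by omega) (by omega) hα hβ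
        refine ⟨fm (a, b), fun _ => ⟨Set.mem_image_of_mem _ hmem, ?_⟩⟩
        simpa only [hfm] using heq
      · exact ⟨0, fun h => absurd h hq⟩
    choose g hg using hval
    have hmaps : ∀ q ∈ (↑P : Set (ℕ × ℕ)), g q ∈ S := fun q hq => (hg q hq).1
    have hinj : Set.InjOn g (↑P : Set (ℕ × ℕ)) := by
      intro q hq q' hq' hgq
      have h1 := (hg q hq).2
      have h2 := (hg q' hq').2
      rw [hgq] at h1
      have hlin : A * q.2 + B * q.1 = A * q'.2 + B * q'.1 := by
        linarith [h1, h2]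
      simp only [hP, Finset.mem_coe, Finset.mem_product, Finset.mem_range] at hq hq'
      have hmodeq : B * q.1 % A = B * q'.1 % A := by
        have e1 : B * q.1 % A = (B * q.1 + A * q.2) % A := by
          rw [Nat.add_mul_mod_self_left]
        have e2 : B * q'.1 % A = (B * q'.1 + A * q'.2) % A := by
          rw [Nat.add_mul_mod_self_left]
        rw [e1, e2]
        congr 1
        linarith [hlin]
      have hq1 : q.1 = q'.1 := by
        have hcan : q.1 ≡ q'.1 [MOD A] :=
          Nat.ModEq.cancel_left_of_coprime (by simpa [Nat.coprime_comm] using hcop) hmodeq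
        have := hcan
        unfold Nat.ModEq at this
        rw [Nat.mod_eq_of_lt hq.1, Nat.mod_eq_of_lt hq'.1] at this
        exact this
      have hq2 : q.2 = q'.2 := by
        rw [hq1] at hlin
        have : A * q.2 = A * q'.2 := by omega
        exact Nat.eq_of_mul_eq_mul_left (by omega) this
      exact Prod.ext hq1 hq2
    have hcard : (↑P : Set (ℕ × ℕ)).ncard ≤ S.ncard :=
      Set.ncard_le_ncard_of_injOn g hmaps hinj hSfin
    have hPcard : (↑P : Set (ℕ × ℕ)).ncard = A * (K + 1) := by
      rw [Set.ncard_coe_finset, hP, Finset.card_product, Finset.card_range, Finset.card_range]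
    -- numeric bound
    have htri : 2 * K + qb = qb * qb := two_tri qb
    have hqbB : B ≤ 3 * qb + 2 := by omega
    have hmB : m ≤ 2 * B := by omega
    have hmA : m ≤ 2 * A + 4 := hA2
    -- cast to ℝ
    have hmR : (100 : ℝ) ≤ (m : ℝ) := by exact_mod_cast hbig
    have hAR : ((m : ℝ) - 4) / 2 ≤ (A : ℝ) := by
      have : (m : ℝ) ≤ 2 * A + 4 := by exact_mod_cast hmA
      linarith
    have hqbR : ((m : ℝ) - 4) / 6 ≤ (qb : ℝ) := by
      have h1 : (m : ℝ) ≤ 2 * B := by exact_mod_cast hmB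
      have h2 : (B : ℝ) ≤ 3 * qb + 2 := by exact_mod_cast hqbB
      linarith
    have hKR : 2 * (K : ℝ) + qb = qb * qb := by exact_mod_cast htri
    have hcount : (m : ℝ) ^ 3 ≤ 1000000 * ((A : ℝ) * (K + 1)) := by
      have hq1 : (16 : ℝ) ≤ (qb : ℝ) := by linarith
      have hK1 : (0.024 : ℝ) * m ^ 2 ≤ 2 * (K : ℝ) := by nlinarith
      have hA1' : (0.48 : ℝ) * m ≤ (A : ℝ) := by linarith
      nlinarith [sq_nonneg ((m : ℝ)), mul_le_mul hA1' hK1 (by positivity) (by linarith)]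
    have hfinal : (A : ℝ) * (K + 1) ≤ (S.ncard : ℝ) := by
      have : (A * (K + 1) : ℕ) ≤ S.ncard := by omega
      exact_mod_cast this
    have hfin2 : (m : ℝ) ^ 3 ≤ 1000000 * (S.ncard : ℝ) := by linarith
    rw [inv_mul_le_iff₀ (by norm_num : (0:ℝ) < 1000000)]
    exact hfin2
end

section
/- Let A, B, C, D, E be rational numbers such that B ≠ 0, or both A ≠ 0 and C ≠ 0. Then there is a constant C' > 0 (depending only on A, B, C, D, E) such that for every positive integer m, the function f(x₁,...,x_m) = (A·m + D)·Σ_{1≤i≤m} x_i² + B·Σ_{1≤i≤m} x_i³ + C·Σ_{1≤i<j≤m} x_i x_j (x_i − x_j) + E takes at least C'·m³ distinct values on the set of integer vectors (x₁,...,x_m) with x₁,...,x_m ≥ 0 and x₁ + ... + x_m = m. -/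
/-!
If `C ≠ 0`, take vectors of ones with three larger entries `2, q + 1, r + 1` inserted after
`a`, `a + b` and `a + b + c` ones. The power sums do not see the order, while moving an entry `v`
one place past a one changes `∑_{i<j} x_i x_j (x_i - x_j)` by `±2v(v - 1)`; so the value is an
affine function of `2a + q(q+1)(a+b) + r(r+1)(a+b+c)`. For `q ≈ 2√N` and `r ≈ 7N` this is a
mixed-radix encoding of `(a, b, c) ∈ [0, N)³`, realised by vectors of every size `m ≥ 15N`.

If `C = 0` and `B ≠ 0`, use that `{1, 5, 6}` and `{2, 3, 7}` have the same sum and sum of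
squares while their sums of cubes differ by `36`. Among seven copies at scale `2^i`, trading
`tᵢ ≤ 7` of the first kind for the second shifts `∑ xᵢ³` by `36 tᵢ 8^i`, so the digits `tᵢ` of
`k` blocks give `8^k` values from vectors of size `≈ 84 · 2^k`.
-/

open Function

namespace SkewCubicValues

def powerSum (k : ℕ) (l : List ℕ) : ℚ := (l.map fun a : ℕ => (a : ℚ) ^ k).sum

@[simp] lemma powerSum_nil (k : ℕ) : powerSum k [] = 0 := rfl

@[simp] lemma powerSum_cons (k a : ℕ) (l : List ℕ) :
    powerSum k (a :: l) = (a : ℚ) ^ k + powerSum k l := by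
  simp [powerSum]

@[simp] lemma powerSum_append (k : ℕ) (l₁ l₂ : List ℕ) :
    powerSum k (l₁ ++ l₂) = powerSum k l₁ + powerSum k l₂ := by
  simp [powerSum]

@[simp] lemma powerSum_replicate (k n a : ℕ) :
    powerSum k (List.replicate n a) = n * (a : ℚ) ^ k := by
  simp [powerSum]

@[simp] lemma powerSum_flatten (k : ℕ) (L : List (List ℕ)) :
    powerSum k L.flatten = (L.map (powerSum k)).sum := by
  induction L with
  | nil => rfl
  | cons l L ih => simp [ih]

lemma powerSum_one (l : List ℕ) : powerSum 1 l = (l.sum : ℚ) := by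
  simp [powerSum, Nat.cast_list_sum]

/-- `∑_{i<j} x_i x_j (x_i - x_j)` for the entries `x_0, x_1, …` of a list. -/
def skewSum : List ℕ → ℚ
  | [] => 0
  | a :: l => (l.map fun b : ℕ => (a : ℚ) * b * (a - b)).sum + skewSum l

lemma sum_map_skew (a : ℕ) (l : List ℕ) :
    (l.map fun b : ℕ => (a : ℚ) * b * (a - b)).sum
      = a ^ 2 * powerSum 1 l - a * powerSum 2 l := by
  induction l with
  | nil => simp
  | cons b l ih => simp only [List.map_cons, List.sum_cons, ih, powerSum_cons]; ring

@[simp] lemma skewSum_nil : skewSum [] = 0 := rfl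

@[simp] lemma skewSum_cons (a : ℕ) (l : List ℕ) :
    skewSum (a :: l) = a ^ 2 * powerSum 1 l - a * powerSum 2 l + skewSum l := by
  rw [skewSum, sum_map_skew]

@[simp] lemma skewSum_append (l₁ l₂ : List ℕ) :
    skewSum (l₁ ++ l₂) = skewSum l₁ + skewSum l₂
      + powerSum 2 l₁ * powerSum 1 l₂ - powerSum 1 l₁ * powerSum 2 l₂ := by
  induction l₁ with
  | nil => simp
  | cons a l ih =>
    simp only [List.cons_append, skewSum_cons, powerSum_append, ih, powerSum_cons]
    ring

@[simp] lemma skewSum_replicate (n a : ℕ) : skewSum (List.replicate n a) = 0 := by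
  induction n with
  | zero => rfl
  | succ n ih =>
    rw [List.replicate_succ, skewSum_cons, ih, powerSum_replicate, powerSum_replicate]
    ring

lemma sum_getD_eq_sum_map {M : Type*} [AddCommMonoid M] {g : ℕ → M} (hg : g 0 = 0) :
    ∀ (l : List ℕ) (m : ℕ), l.length ≤ m → ∑ i : Fin m, g (l.getD i 0) = (l.map g).sum
  | [], m, _ => by simp [hg]
  | a :: l, 0, h => by simp at h
  | a :: l, m + 1, h => by
    rw [Fin.sum_univ_succ]
    simp only [Fin.val_zero, List.getD_cons_zero, Fin.val_succ, List.getD_cons_succ]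
    rw [sum_getD_eq_sum_map hg l m (by simpa using h), List.map_cons, List.sum_cons]

lemma sum_lt_getD_eq_skewSum :
    ∀ (l : List ℕ) (m : ℕ), l.length ≤ m →
      ∑ i : Fin m, ∑ j : Fin m, (if i < j then
        (l.getD i 0 : ℚ) * (l.getD j 0 : ℚ) * ((l.getD i 0 : ℚ) - (l.getD j 0 : ℚ)) else 0)
        = skewSum l
  | [], m, _ => by simp
  | a :: l, 0, h => by simp at h
  | a :: l, m + 1, h => by
    have hl : l.length ≤ m := by simpa using h
    rw [Fin.sum_univ_succ, Fin.sum_univ_succ]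
    simp only [Fin.sum_univ_succ (n := m), Fin.val_zero, Fin.val_succ, List.getD_cons_zero,
      List.getD_cons_succ, lt_self_iff_false, Fin.succ_pos, Fin.not_lt_zero, Fin.succ_lt_succ_iff,
      if_true, if_false, zero_add, skewSum]
    rw [sum_lt_getD_eq_skewSum l m hl,
      sum_getD_eq_sum_map (g := fun b : ℕ => (a : ℚ) * b * (a - b)) (by simp) l m hl]

lemma injective_of_eq_add_mul {ι : Type*} {F : ι → ℚ} {g : ι → ℕ} (K c : ℚ)
    (hc : c ≠ 0) (hg : Injective g) (hF : ∀ i, F i = K + c * g i) : Injective F := by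
  rw [show F = (fun x => K + c * x) ∘ ((↑) ∘ g) from funext hF]
  exact (add_right_injective K).comp
    ((mul_right_injective₀ hc).comp (Nat.cast_injective.comp hg))

lemma eq_and_eq_of_add_mul_eq {Q x y x' y' : ℕ} (hx : x < Q) (hx' : x' < Q)
    (h : x + Q * y = x' + Q * y') : x = x' ∧ y = y' := by
  have hQ : 0 < Q := by omega
  obtain ⟨hy, hx⟩ := (Nat.div_mod_unique hQ).2 ⟨h, hx⟩
  obtain ⟨hy', hx'⟩ := (Nat.div_mod_unique hQ).2 ⟨rfl, hx'⟩
  exact ⟨hx.symm.trans hx', hy.symm.trans hy'⟩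

lemma mixedRadix_injective {N Q R : ℕ} (hQ : 2 * N ≤ Q) (hR : 2 * N * (Q + 1) ≤ R) :
    Injective fun p : Fin N × Fin N × Fin N =>
      2 * (p.1 : ℕ) + Q * (p.1 + p.2.1) + R * (p.1 + p.2.1 + p.2.2) := by
  have hlt : ∀ a b : Fin N, 2 * (a : ℕ) + Q * (a + b) < R := fun a b => by
    have : Q * (a + b) ≤ Q * (2 * N) := Nat.mul_le_mul_left Q (by omega)
    nlinarith [a.isLt]
  rintro ⟨a, b, c⟩ ⟨a', b', c'⟩ h
  dsimp only at h
  obtain ⟨h₁, habc⟩ := eq_and_eq_of_add_mul_eq (hlt a b) (hlt a' b') h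
  obtain ⟨ha, hab⟩ := eq_and_eq_of_add_mul_eq (by omega) (by omega) h₁
  simp only [Prod.mk.injEq, Fin.ext_iff]
  omega

variable (A B C D E : ℚ) (m : ℕ)

def value (x : Fin m → ℕ) : ℚ :=
  (A * (m : ℚ) + D) * ∑ i : Fin m, (x i : ℚ) ^ 2
    + B * ∑ i : Fin m, (x i : ℚ) ^ 3
    + C * ∑ i : Fin m, ∑ j : Fin m,
        (if i < j then (x i : ℚ) * (x j : ℚ) * ((x i : ℚ) - (x j : ℚ)) else 0)
    + E

def valueSet : Set ℚ := value A B C D E m '' {x : Fin m → ℕ | ∑ i : Fin m, x i = m}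

def listValue (l : List ℕ) : ℚ :=
  (A * (m : ℚ) + D) * powerSum 2 l + B * powerSum 3 l + C * skewSum l + E

lemma value_getD {l : List ℕ} (hl : l.length ≤ m) :
    value A B C D E m (fun i => l.getD i 0) = listValue A B C D E m l := by
  have h2 := sum_getD_eq_sum_map (g := fun a : ℕ => (a : ℚ) ^ 2) (by simp) l m hl
  have h3 := sum_getD_eq_sum_map (g := fun a : ℕ => (a : ℚ) ^ 3) (by simp) l m hl
  rw [value, listValue, h2, h3, sum_lt_getD_eq_skewSum l m hl]
  rfl

lemma listValue_mem_valueSet {l : List ℕ} (hpos : ∀ a ∈ l, 0 < a) (hsum : l.sum = m) :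
    listValue A B C D E m l ∈ valueSet A B C D E m := by
  have hl : l.length ≤ m := hsum ▸ List.length_le_sum_of_one_le l hpos
  refine ⟨fun i => l.getD i 0, ?_, value_getD A B C D E m hl⟩
  simpa [hsum] using sum_getD_eq_sum_map (g := id) rfl l m hl

lemma valueSet_finite : (valueSet A B C D E m).Finite := by
  refine ((Finset.Nat.antidiagonalTuple m m).finite_toSet.subset fun x hx => ?_).image _
  exact Finset.Nat.mem_antidiagonalTuple.mpr hx

lemma card_le_ncard_valueSet {ι : Type*} [Fintype ι] (lists : ι → List ℕ)
    (hpos : ∀ i, ∀ a ∈ lists i, 0 < a) (hsum : ∀ i, (lists i).sum = m)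
    (hinj : Injective fun i => listValue A B C D E m (lists i)) :
    Fintype.card ι ≤ (valueSet A B C D E m).ncard := by
  rw [← Nat.card_eq_fintype_card, ← Set.ncard_range_of_injective hinj]
  refine Set.ncard_le_ncard ?_ (valueSet_finite A B C D E m)
  rintro _ ⟨i, rfl⟩
  exact listValue_mem_valueSet A B C D E m (hpos i) (hsum i)

lemma one_le_ncard_valueSet (hm : 0 < m) : 1 ≤ (valueSet A B C D E m).ncard := by
  simpa using card_le_ncard_valueSet A B C D E m (fun _ : Unit => [m]) (by simpa using hm)
    (by simp) (injective_of_subsingleton _)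

def spacedList (a b c d q r : ℕ) : List ℕ :=
  List.replicate a 1 ++ 2 :: List.replicate b 1 ++ (q + 1) :: List.replicate c 1
    ++ (r + 1) :: List.replicate d 1

lemma powerSum_spacedList (k a b c d q r : ℕ) :
    powerSum k (spacedList a b c d q r)
      = (a + b + c + d : ℕ) + 2 ^ k + ((q + 1 : ℕ) : ℚ) ^ k + ((r + 1 : ℕ) : ℚ) ^ k := by
  simp only [spacedList, powerSum_append, powerSum_cons, powerSum_replicate]
  push_cast
  ring

lemma skewSum_spacedList (a b c d q r : ℕ) :
    skewSum (spacedList a b c d q r) = skewSum [2, q + 1, r + 1]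
      + (2 + q * (q + 1) + r * (r + 1) : ℕ) * (a + b + c + d : ℕ)
      - 2 * (2 * a + q * (q + 1) * (a + b) + r * (r + 1) * (a + b + c) : ℕ) := by
  simp only [spacedList, List.append_assoc, List.cons_append, skewSum_append, skewSum_cons,
    skewSum_replicate, skewSum_nil, powerSum_append, powerSum_cons, powerSum_replicate,
    powerSum_nil]
  push_cast
  ring

lemma sum_spacedList (a b c d q r : ℕ) :
    (spacedList a b c d q r).sum = a + b + c + d + q + r + 4 := by
  simp only [spacedList, List.sum_append, List.sum_cons, List.sum_replicate, smul_eq_mul, mul_one]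
  ring

lemma pos_of_mem_spacedList {a b c d q r x : ℕ} (hx : x ∈ spacedList a b c d q r) : 0 < x := by
  simp only [spacedList, List.mem_append, List.mem_cons, List.mem_replicate] at hx
  omega

lemma cube_le_ncard_valueSet_of_mixedRadix (hC : C ≠ 0) {N q r : ℕ} (hq : 2 * N ≤ q * (q + 1))
    (hr : 2 * N * (q * (q + 1) + 1) ≤ r * (r + 1)) (hm : q + r + 3 * N + 1 ≤ m) :
    N ^ 3 ≤ (valueSet A B C D E m).ncard := by
  set L := m - (q + r + 4)
  have hL : ∀ p : Fin N × Fin N × Fin N, (p.1 : ℕ) + p.2.1 + p.2.2 ≤ L := fun p => by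
    have := p.1.isLt; have := p.2.1.isLt; have := p.2.2.isLt
    omega
  have hvalue : ∀ p : Fin N × Fin N × Fin N,
      listValue A B C D E m (spacedList p.1 p.2.1 p.2.2 (L - (p.1 + p.2.1 + p.2.2)) q r)
        = listValue A B C D E m (spacedList 0 0 0 L q r) + (-2 * C) * (2 * (p.1 : ℕ)
          + q * (q + 1) * (p.1 + p.2.1) + r * (r + 1) * (p.1 + p.2.1 + p.2.2) : ℕ) := by
    intro p
    simp only [listValue, powerSum_spacedList, skewSum_spacedList, Nat.add_sub_of_le (hL p)]
    push_cast
    ring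
  simpa [pow_three] using card_le_ncard_valueSet A B C D E m
    (fun p : Fin N × Fin N × Fin N => spacedList p.1 p.2.1 p.2.2 (L - (p.1 + p.2.1 + p.2.2)) q r)
    (fun _ _ => pos_of_mem_spacedList)
    (fun p => by rw [sum_spacedList]; have := hL p; omega)
    (injective_of_eq_add_mul _ _ (by simpa using hC) (mixedRadix_injective hq hr) hvalue)

lemma cube_le_ncard_valueSet_of_C_ne_zero (hC : C ≠ 0) {N : ℕ} (hN : 15 * N ≤ m) :
    N ^ 3 ≤ (valueSet A B C D E m).ncard := by
  obtain rfl | hN0 := Nat.eq_zero_or_pos N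
  · simp
  set s := Nat.sqrt (4 * N)
  have hs : 4 * N < (s + 1) * (s + 1) := Nat.lt_succ_sqrt _
  have hs' : s * s ≤ 4 * N := Nat.sqrt_le _
  have hs2 : s ≤ 2 * N := by nlinarith
  refine cube_le_ncard_valueSet_of_mixedRadix A B C D E m hC (q := s + 1) (r := 7 * N + 1)
    (by nlinarith) ?_ (by omega)
  have : (s + 1) * (s + 1 + 1) + 1 ≤ 10 * N + 3 := by nlinarith
  nlinarith

def tripleBlock (c : ℕ) (t : Fin 8) : List ℕ :=
  (List.replicate (7 - t) [c, 5 * c, 6 * c]).flatten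
    ++ (List.replicate t [2 * c, 3 * c, 7 * c]).flatten

lemma powerSum_tripleBlock (k c : ℕ) (t : Fin 8) :
    powerSum k (tripleBlock c t)
      = ((7 - t : ℕ) * (1 + 5 ^ k + 6 ^ k) + t * (2 ^ k + 3 ^ k + 7 ^ k)) * (c : ℚ) ^ k := by
  simp only [tripleBlock, powerSum_append, powerSum_flatten, List.map_replicate,
    List.sum_replicate, powerSum_cons, powerSum_nil, nsmul_eq_mul]
  push_cast
  ring

@[simp] lemma sum_tripleBlock (c : ℕ) (t : Fin 8) : (tripleBlock c t).sum = 84 * c := by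
  have h : powerSum 1 (tripleBlock c t) = 84 * c := by
    rw [powerSum_tripleBlock, Nat.cast_sub (Nat.le_of_lt_succ t.isLt)]
    ring
  exact_mod_cast (powerSum_one _).symm.trans h

@[simp] lemma powerSum_two_tripleBlock (c : ℕ) (t : Fin 8) :
    powerSum 2 (tripleBlock c t) = 434 * (c : ℚ) ^ 2 := by
  rw [powerSum_tripleBlock, Nat.cast_sub (Nat.le_of_lt_succ t.isLt)]
  ring

@[simp] lemma powerSum_three_tripleBlock (c : ℕ) (t : Fin 8) :
    powerSum 3 (tripleBlock c t) = 2394 * (c : ℚ) ^ 3 + 36 * (t : ℕ) * (c : ℚ) ^ 3 := by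
  rw [powerSum_tripleBlock, Nat.cast_sub (Nat.le_of_lt_succ t.isLt)]
  ring

def digitList {k : ℕ} (j : Fin k → Fin 8) (L : ℕ) : List ℕ :=
  (List.ofFn fun i => tripleBlock (2 ^ (i : ℕ)) (j i)).flatten ++ List.replicate L 1

lemma powerSum_two_digitList {k : ℕ} (j : Fin k → Fin 8) (L : ℕ) :
    powerSum 2 (digitList j L) = powerSum 2 (digitList (0 : Fin k → Fin 8) L) := by
  simp [digitList, List.sum_ofFn]

lemma powerSum_three_digitList {k : ℕ} (j : Fin k → Fin 8) (L : ℕ) :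
    powerSum 3 (digitList j L)
      = powerSum 3 (digitList (0 : Fin k → Fin 8) L) + 36 * (finFunctionFinEquiv j : ℕ) := by
  simp only [digitList, powerSum_append, powerSum_flatten, List.map_ofFn, List.sum_ofFn,
    comp_def, powerSum_three_tripleBlock, Finset.sum_add_distrib, finFunctionFinEquiv_apply]
  simp only [Pi.zero_apply, Fin.val_zero, Nat.cast_zero, mul_zero, zero_mul, add_zero,
    Finset.sum_const_zero]
  push_cast
  rw [add_right_comm, Finset.mul_sum]
  congr 2 with i
  rw [pow_right_comm]
  norm_num
  ring

lemma sum_digitList {k : ℕ} (j : Fin k → Fin 8) (L : ℕ) :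
    (digitList j L).sum = 84 * ∑ i : Fin k, 2 ^ (i : ℕ) + L := by
  simp [digitList, List.sum_flatten, List.sum_ofFn, Finset.mul_sum]

lemma pos_of_mem_tripleBlock {c a : ℕ} {t : Fin 8} (hc : 0 < c) (ha : a ∈ tripleBlock c t) :
    0 < a := by
  simp only [tripleBlock, List.mem_append, List.mem_flatten, List.mem_replicate] at ha
  rcases ha with ⟨_, ⟨-, rfl⟩, ha⟩ | ⟨_, ⟨-, rfl⟩, ha⟩ <;>
    simp only [List.mem_cons, List.not_mem_nil, or_false] at ha <;>
    rcases ha with rfl | rfl | rfl <;> positivity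

lemma pos_of_mem_digitList {k : ℕ} {j : Fin k → Fin 8} {L a : ℕ} (ha : a ∈ digitList j L) :
    0 < a := by
  rw [digitList, List.mem_append, List.mem_flatten] at ha
  rcases ha with ⟨_, hl, ha⟩ | ha
  · obtain ⟨i, rfl⟩ := List.mem_ofFn.1 hl
    exact pos_of_mem_tripleBlock (by positivity) ha
  · rw [List.eq_of_mem_replicate ha]
    exact one_pos

lemma cube_le_ncard_valueSet_of_B_ne_zero (hB : B ≠ 0) {k : ℕ} (hk : 84 * 2 ^ k ≤ m) :
    (2 ^ k) ^ 3 ≤ (valueSet A B 0 D E m).ncard := by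
  have hgeom : ∑ i : Fin k, 2 ^ (i : ℕ) < 2 ^ k := by
    have := geom_sum_mul_add 1 k
    norm_num at this
    rw [Fin.sum_univ_eq_sum_range (2 ^ ·)]
    omega
  set L := m - 84 * ∑ i : Fin k, 2 ^ (i : ℕ)
  have hvalue : ∀ j : Fin k → Fin 8, listValue A B 0 D E m (digitList j L)
      = listValue A B 0 D E m (digitList (0 : Fin k → Fin 8) L)
        + 36 * B * (finFunctionFinEquiv j : ℕ) := by
    intro j
    simp only [listValue, powerSum_two_digitList j, powerSum_three_digitList j]
    ring
  have := card_le_ncard_valueSet A B 0 D E m (fun j : Fin k → Fin 8 => digitList j L)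
    (fun _ _ => pos_of_mem_digitList) (fun j => by rw [sum_digitList]; omega)
    (injective_of_eq_add_mul _ _ (mul_ne_zero (by norm_num) hB)
      (Fin.val_injective.comp finFunctionFinEquiv.injective) hvalue)
  rwa [Fintype.card_fun, Fintype.card_fin, Fintype.card_fin, show 8 = 2 ^ 3 from rfl,
    pow_right_comm] at this

end SkewCubicValues

theorem stmt10 (A B C D E : ℚ) (h : B ≠ 0 ∨ (A ≠ 0 ∧ C ≠ 0)) :
    ∃ C' : ℝ, 0 < C' ∧
      ∀ m : ℕ, 0 < m →
        C' * (m : ℝ) ^ 3 ≤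
          (Set.ncard ((fun x : Fin m → ℕ =>
              (A * (m : ℚ) + D) * ∑ i : Fin m, (x i : ℚ) ^ 2
            + B * ∑ i : Fin m, (x i : ℚ) ^ 3
            + C * ∑ i : Fin m, ∑ j : Fin m,
                (if i < j then (x i : ℚ) * (x j : ℚ) * ((x i : ℚ) - (x j : ℚ)) else 0)
            + E) ''
            {x : Fin m → ℕ | ∑ i : Fin m, x i = m}) : ℝ) := by
  refine ⟨1 / 168 ^ 3, by positivity, fun m hm => ?_⟩
  show _ ≤ ((SkewCubicValues.valueSet A B C D E m).ncard : ℝ)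
  obtain ⟨n, hmn, hn⟩ : ∃ n : ℕ,
      m ≤ n * 168 ∧ n ^ 3 ≤ (SkewCubicValues.valueSet A B C D E m).ncard := by
    by_cases hsmall : m < 168
    · exact ⟨1, by omega, by simpa using SkewCubicValues.one_le_ncard_valueSet A B C D E m hm⟩
    by_cases hC : C = 0
    · subst hC
      have hB : B ≠ 0 := by simpa using h
      have hk₁ : 2 ^ Nat.log 2 (m / 84) ≤ m / 84 := Nat.pow_log_le_self 2 (by omega)
      have hk₂ : m / 84 < 2 * 2 ^ Nat.log 2 (m / 84) := by
        rw [← pow_succ']; exact Nat.lt_pow_succ_log_self one_lt_two _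
      exact ⟨2 ^ Nat.log 2 (m / 84), by omega,
        SkewCubicValues.cube_le_ncard_valueSet_of_B_ne_zero A B D E m hB (by omega)⟩
    · exact ⟨m / 15, by omega,
        SkewCubicValues.cube_le_ncard_valueSet_of_C_ne_zero A B C D E m hC (Nat.mul_div_le m 15)⟩
  have hmn' : (m : ℝ) / 168 ≤ n := (div_le_iff₀ (by norm_num)).2 (by exact_mod_cast hmn)
  calc 1 / 168 ^ 3 * (m : ℝ) ^ 3 = ((m : ℝ) / 168) ^ 3 := by ring
    _ ≤ (n : ℝ) ^ 3 := by gcongr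
    _ ≤ _ := by exact_mod_cast hn
end

section
/- For all integers ℓ, P ≥ 0 there exists Q = Q(ℓ,P) with the following property: if A'₁, ..., A'_ℓ are pairwise disjoint vertex-sets in a 3-graph with |A'_i| ≥ Q for every i, then there exist subsets A_i ⊆ A'_i for i = 1,...,ℓ with |A_i| = P such that d(A_i, A_j, A_k) ∈ {0,1} for all (not necessarily distinct) i, j, k ∈ {1,...,ℓ}. -/
open Classical

/-- The set of 3-element vertex sets `{x,y,z}` with `x ∈ X`, `y ∈ Y`, `z ∈ Z`. -/
noncomputable def triples3 (n : ℕ) (X Y Z : Finset (Fin n)) : Finset (Finset (Fin n)) :=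
  (Finset.powersetCard 3 (Finset.univ : Finset (Fin n))).filter
    (fun e => ∃ x ∈ X, ∃ y ∈ Y, ∃ z ∈ Z, e = {x, y, z})

/-- The density `d(X,Y,Z)` in the 3-graph with edge set `E`: the fraction of 3-element
sets `{x,y,z}` with `x ∈ X`, `y ∈ Y`, `z ∈ Z` that are edges. -/
noncomputable def dens3 (n : ℕ) (E : Finset (Finset (Fin n))) (X Y Z : Finset (Fin n)) : ℝ :=
  (((triples3 n X Y Z).filter (fun e => e ∈ E)).card : ℝ) / ((triples3 n X Y Z).card : ℝ)

/-! Homogeneity passes to subsets, so it suffices to shrink the family once for each index pattern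
`(i, j, k)` in turn. For one pattern, making the edge indicator constant on the triples is Ramsey's
theorem in one of three guises, according to the coincidences among `i, j, k`: for the 3-sets of
one set, for a 2-set of one set with a point of another, or for the product of three sets. The
last two follow from the hypergraph Ramsey theorem by fixing a small subset `Z'` of the last set,
colouring the other configurations by their vector of colours on `Z'`, taking a homogeneous set
for this finer colouring, and then a colour class of the common vector inside `Z'`. -/

open Finset

section Ramsey

variable {V κ : Type*}

theorem exists_subset_card_le_forall_eq [Fintype κ] [Nonempty κ] (f : V → κ) {S : Finset V}
    {m : ℕ} (h : Fintype.card κ * m ≤ #S) : ∃ T ⊆ S, m ≤ #T ∧ ∃ c, ∀ x ∈ T, f x = c := by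
  obtain ⟨c, -, hc⟩ :=
    exists_le_card_fiber_of_mul_le_card_of_maps_to (fun x _ => mem_univ (f x)) univ_nonempty h
  exact ⟨_, filter_subset _ _, hc, c, fun x hx => (mem_filter.1 hx).2⟩

theorem exists_subset_card_le_forall_eq_of_subtype [Fintype κ] [Nonempty κ] {Z : Finset V}
    (q : Z → κ) {m : ℕ} (h : Fintype.card κ * m ≤ #Z) :
    ∃ C ⊆ Z, m ≤ #C ∧ ∃ c, ∀ z : Z, (z : V) ∈ C → q z = c := by
  obtain ⟨T, -, hT, c, hc⟩ :=
    exists_subset_card_le_forall_eq q (S := univ) (by rwa [card_univ, Fintype.card_coe])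
  refine ⟨T.map (Function.Embedding.subtype _), fun z hz => ?_, by rwa [card_map], c,
    fun z hz => hc z ?_⟩
  · obtain ⟨z, -, rfl⟩ := mem_map.1 hz
    exact z.2
  · simpa using hz

theorem ne_of_card_eq_three [DecidableEq V] {x y z : V} (h : #{x, y, z} = 3) : x ≠ y := by
  rintro rfl
  have := card_le_two (a := x) (b := z)
  simp_all

theorem card_fun_le_pow [DecidableEq V] [Fintype κ] {r : ℕ} (hκ : Fintype.card κ ≤ r)
    (Z : Finset V) : Fintype.card (Z → κ) ≤ r ^ #Z := by
  rw [Fintype.card_fun, Fintype.card_coe]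
  exact Nat.pow_le_pow_left hκ _

def endHomogeneousBound (R : ℕ → ℕ) : ℕ → ℕ
  | 0 => 0
  | t + 1 => R (endHomogeneousBound R t) + 1

def ramseyBound (r : ℕ) : ℕ → ℕ → ℕ
  | 0, m => m
  | k + 1, m => endHomogeneousBound (ramseyBound r k) (r * m)

variable [LinearOrder V]

theorem exists_endHomogeneous {k : ℕ} {R : ℕ → ℕ}
    (hR : ∀ m (S : Finset V) (χ : Finset V → κ), R m ≤ #S →
      ∃ T ⊆ S, m ≤ #T ∧ ∃ c, ∀ s ⊆ T, #s = k → χ s = c)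
    (χ : Finset V → κ) (t : ℕ) {S : Finset V} (hS : endHomogeneousBound R t ≤ #S) :
    ∃ T ⊆ S, t ≤ #T ∧ ∃ col : V → κ,
      ∀ x ∈ T, ∀ s ⊆ T, (∀ y ∈ s, x < y) → #s = k → χ (insert x s) = col x := by
  induction t generalizing S with
  | zero => exact ⟨∅, empty_subset _, le_rfl, fun _ => χ ∅, by simp⟩
  | succ t ih =>
    -- Put `x = min S` first, shrink the rest so that `χ (insert x s)` is constant, and recurse.
    have hS : R (endHomogeneousBound R t) + 1 ≤ #S := hS
    have hne : S.Nonempty := card_pos.1 (by omega)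
    set x := S.min' hne
    obtain ⟨T', hT'S, hT', c, hc⟩ :=
      hR (endHomogeneousBound R t) (S.erase x) (fun s => χ (insert x s))
        (by rw [card_erase_of_mem (min'_mem S hne)]; omega)
    obtain ⟨T, hTT', hT, col, hcol⟩ := ih hT'
    have hxT : x ∉ T := fun h => (mem_erase.1 (hT'S (hTT' h))).1 rfl
    have hlt : ∀ y ∈ T, x < y := fun y hy =>
      (min'_le S y (mem_of_mem_erase (hT'S (hTT' hy)))).lt_of_ne (ne_of_mem_of_not_mem hy hxT).symm
    have hsub : ∀ s ⊆ insert x T, ∀ y, x ≤ y → (∀ z ∈ s, y < z) → s ⊆ T :=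
      fun s hs y hxy hys z hz => (mem_insert.1 (hs hz)).resolve_left (hxy.trans_lt (hys z hz)).ne'
    refine ⟨insert x T,
      insert_subset (min'_mem S hne) ((hTT'.trans hT'S).trans (erase_subset _ _)),
      by rw [card_insert_of_notMem hxT]; omega, Function.update col x c, ?_⟩
    intro y hy s hs hys hsk
    rcases mem_insert.1 hy with rfl | hy
    · rw [Function.update_self]
      exact hc s ((hsub s hs _ le_rfl hys).trans hTT') hsk
    · rw [Function.update_of_ne (hlt y hy).ne']
      exact hcol y hy s (hsub s hs y (hlt y hy).le hys) hys hsk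

theorem exists_homogeneous_subset [Fintype κ] {r : ℕ} (hκ : Fintype.card κ ≤ r) (k m : ℕ)
    (χ : Finset V → κ) {S : Finset V} (hS : ramseyBound r k m ≤ #S) :
    ∃ T ⊆ S, m ≤ #T ∧ ∃ c, ∀ s ⊆ T, #s = k → χ s = c := by
  induction k generalizing m S χ with
  | zero => exact ⟨S, subset_rfl, hS, χ ∅, fun s _ hs => by rw [card_eq_zero.1 hs]⟩
  | succ k ih =>
    have : Nonempty κ := ⟨χ ∅⟩
    -- On an end-homogeneous set, a `(k + 1)`-set gets the colour `col` of its minimum.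
    obtain ⟨T, hTS, hT, col, hcol⟩ := exists_endHomogeneous (fun m S χ hS => ih m χ hS) χ _ hS
    obtain ⟨U, hUT, hU, c, hc⟩ := exists_subset_card_le_forall_eq col (S := T)
      (le_trans (Nat.mul_le_mul_right m hκ) hT)
    refine ⟨U, hUT.trans hTS, hU, c, fun s hsU hs => ?_⟩
    have hne : s.Nonempty := card_pos.1 (by omega)
    have hmin := min'_mem s hne
    rw [← insert_erase hmin, hcol _ (hUT (hsU hmin)) _ ((erase_subset _ _).trans (hsU.trans hUT))
      (fun y hy => lt_of_le_of_ne (min'_le s y (mem_of_mem_erase hy)) (ne_of_mem_erase hy).symm)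
      (by rw [card_erase_of_mem hmin, hs]; rfl)]
    exact hc _ (hsU hmin)

def prodRamseyBound (k r m : ℕ) : ℕ := max (ramseyBound (r ^ (r * m)) k m) (r * m)

theorem exists_homogeneous_subset_prod [Fintype κ] [Nonempty κ] {r : ℕ}
    (hκ : Fintype.card κ ≤ r) (k m : ℕ) (χ : Finset V → V → κ) {S Z : Finset V}
    (hS : prodRamseyBound k r m ≤ #S) (hZ : prodRamseyBound k r m ≤ #Z) :
    ∃ X ⊆ S, ∃ C ⊆ Z, m ≤ #X ∧ m ≤ #C ∧ ∃ c, ∀ s ⊆ X, #s = k → ∀ z ∈ C, χ s z = c := by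
  obtain ⟨Z', hZ'Z, hZ'⟩ := exists_subset_card_eq ((le_max_right _ _).trans hZ)
  have hpat : Fintype.card (Z' → κ) ≤ r ^ (r * m) := hZ' ▸ card_fun_le_pow hκ Z'
  obtain ⟨X, hXS, hX, q, hq⟩ := exists_homogeneous_subset hpat k m
    (fun s (z : Z') => χ s z) ((le_max_left _ _).trans hS)
  obtain ⟨C, hCZ', hC, c, hc⟩ := exists_subset_card_le_forall_eq_of_subtype q
    (hZ' ▸ Nat.mul_le_mul_right m hκ)
  refine ⟨X, hXS, C, hCZ'.trans hZ'Z, hX, hC, c, fun s hsX hs z hz => ?_⟩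
  rw [← hc ⟨z, hCZ' hz⟩ hz, ← hq s hsX hs]

def prodRamseyBound₃ (r m : ℕ) : ℕ := max (prodRamseyBound 1 (r ^ (r * m)) m) (r * m)

theorem exists_homogeneous_subset_prod₃ [Fintype κ] [Nonempty κ] {r : ℕ}
    (hκ : Fintype.card κ ≤ r) (m : ℕ) (χ : Finset V → κ) {S T Z : Finset V}
    (hS : prodRamseyBound₃ r m ≤ #S) (hT : prodRamseyBound₃ r m ≤ #T)
    (hZ : prodRamseyBound₃ r m ≤ #Z) :
    ∃ X ⊆ S, ∃ Y ⊆ T, ∃ C ⊆ Z, m ≤ #X ∧ m ≤ #Y ∧ m ≤ #C ∧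
      ∃ c, ∀ x ∈ X, ∀ y ∈ Y, ∀ z ∈ C, χ {x, y, z} = c := by
  obtain ⟨Z', hZ'Z, hZ'⟩ := exists_subset_card_eq ((le_max_right _ _).trans hZ)
  have hpat : Fintype.card (Z' → κ) ≤ r ^ (r * m) := hZ' ▸ card_fun_le_pow hκ Z'
  obtain ⟨X, hXS, Y, hYT, hX, hY, q, hq⟩ := exists_homogeneous_subset_prod hpat 1 m
    (fun s y (z : Z') => χ (s ∪ {y, ↑z})) ((le_max_left _ _).trans hS)
    ((le_max_left _ _).trans hT)
  obtain ⟨C, hCZ', hC, c, hc⟩ := exists_subset_card_le_forall_eq_of_subtype q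
    (hZ' ▸ Nat.mul_le_mul_right m hκ)
  refine ⟨X, hXS, Y, hYT, C, hCZ'.trans hZ'Z, hX, hY, hC, c, fun x hx y hy z hz => ?_⟩
  rw [← hc ⟨z, hCZ' hz⟩ hz, ← hq {x} (singleton_subset_iff.2 hx) (card_singleton x) y hy]
  exact congrArg χ (insert_eq x {y, z})

end Ramsey

section Hypergraph

variable {n : ℕ} {E : Finset (Finset (Fin n))} {X Y Z X' Y' Z' : Finset (Fin n)}

theorem mem_triples3 {e : Finset (Fin n)} :
    e ∈ triples3 n X Y Z ↔ #e = 3 ∧ ∃ x ∈ X, ∃ y ∈ Y, ∃ z ∈ Z, e = {x, y, z} := by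
  simp [triples3, mem_powersetCard]

theorem triples3_comm₁₂ : triples3 n X Y Z = triples3 n Y X Z := by
  ext e
  simp only [mem_triples3]
  exact and_congr_right fun _ =>
    ⟨fun ⟨x, hx, y, hy, z, hz, he⟩ => ⟨y, hy, x, hx, z, hz, he.trans (insert_comm x y {z})⟩,
      fun ⟨y, hy, x, hx, z, hz, he⟩ => ⟨x, hx, y, hy, z, hz, he.trans (insert_comm y x {z})⟩⟩

theorem triples3_comm₂₃ : triples3 n X Y Z = triples3 n X Z Y := by
  ext e
  simp only [mem_triples3]
  exact and_congr_right fun _ =>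
    ⟨fun ⟨x, hx, y, hy, z, hz, he⟩ => ⟨x, hx, z, hz, y, hy, he.trans (by rw [pair_comm])⟩,
      fun ⟨x, hx, z, hz, y, hy, he⟩ => ⟨x, hx, y, hy, z, hz, he.trans (by rw [pair_comm])⟩⟩

def IsHomogeneous (E : Finset (Finset (Fin n))) (X Y Z : Finset (Fin n)) : Prop :=
  ∃ c : Bool, ∀ e ∈ triples3 n X Y Z, decide (e ∈ E) = c

theorem isHomogeneous_comm₁₂ : IsHomogeneous E X Y Z ↔ IsHomogeneous E Y X Z := by
  rw [IsHomogeneous, IsHomogeneous, triples3_comm₁₂]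

theorem isHomogeneous_comm₂₃ : IsHomogeneous E X Y Z ↔ IsHomogeneous E X Z Y := by
  rw [IsHomogeneous, IsHomogeneous, triples3_comm₂₃]

theorem IsHomogeneous.mono (h : IsHomogeneous E X Y Z) (hX : X' ⊆ X) (hY : Y' ⊆ Y)
    (hZ : Z' ⊆ Z) : IsHomogeneous E X' Y' Z' := by
  obtain ⟨c, hc⟩ := h
  refine ⟨c, fun e he => hc e ?_⟩
  obtain ⟨he, x, hx, y, hy, z, hz, rfl⟩ := mem_triples3.1 he
  exact mem_triples3.2 ⟨he, x, hX hx, y, hY hy, z, hZ hz, rfl⟩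

theorem IsHomogeneous.dens3_eq_zero_or_one (h : IsHomogeneous E X Y Z) :
    dens3 n E X Y Z = 0 ∨ dens3 n E X Y Z = 1 := by
  obtain ⟨c, hc⟩ := h
  cases c with
  | false =>
    left
    rw [dens3, filter_false_of_mem fun e he => by simpa using hc e he]
    simp
  | true =>
    -- With no triples at all, `dens3` is `0 / 0 = 0`.
    rw [dens3, filter_true_of_mem fun e he => by simpa using hc e he]
    exact (eq_or_ne ((triples3 n X Y Z).card : ℝ) 0).imp (fun h0 => by simp [h0]) div_self

theorem exists_isHomogeneous_self (m : ℕ) (hS : ramseyBound 2 3 m ≤ #X) :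
    ∃ X' ⊆ X, m ≤ #X' ∧ IsHomogeneous E X' X' X' := by
  obtain ⟨X', hX'X, hX', c, hc⟩ :=
    exists_homogeneous_subset (by simp) 3 m (fun e => decide (e ∈ E)) hS
  refine ⟨X', hX'X, hX', c, fun e he => hc e ?_ (mem_triples3.1 he).1⟩
  obtain ⟨-, x, hx, y, hy, z, hz, rfl⟩ := mem_triples3.1 he
  simp [insert_subset_iff, hx, hy, hz]

theorem exists_isHomogeneous_pair (m : ℕ) (hX : prodRamseyBound 2 2 m ≤ #X)
    (hZ : prodRamseyBound 2 2 m ≤ #Z) :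
    ∃ X' ⊆ X, ∃ Z' ⊆ Z, m ≤ #X' ∧ m ≤ #Z' ∧ IsHomogeneous E X' X' Z' := by
  obtain ⟨X', hX'X, Z', hZ'Z, hX', hZ', c, hc⟩ :=
    exists_homogeneous_subset_prod (by simp) 2 m (fun s z => decide (insert z s ∈ E)) hX hZ
  refine ⟨X', hX'X, Z', hZ'Z, hX', hZ', c, fun e he => ?_⟩
  obtain ⟨he, x, hx, y, hy, z, hz, rfl⟩ := mem_triples3.1 he
  have hpair : ({x, y, z} : Finset (Fin n)) = insert z {x, y} := by
    rw [pair_comm y z, insert_comm]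
  rw [hpair]
  exact hc {x, y} (by simp [insert_subset_iff, hx, hy]) (card_pair (ne_of_card_eq_three he)) z hz

theorem exists_isHomogeneous_triple (m : ℕ) (hX : prodRamseyBound₃ 2 m ≤ #X)
    (hY : prodRamseyBound₃ 2 m ≤ #Y) (hZ : prodRamseyBound₃ 2 m ≤ #Z) :
    ∃ X' ⊆ X, ∃ Y' ⊆ Y, ∃ Z' ⊆ Z, m ≤ #X' ∧ m ≤ #Y' ∧ m ≤ #Z' ∧ IsHomogeneous E X' Y' Z' := by
  obtain ⟨X', hX'X, Y', hY'Y, Z', hZ'Z, hX', hY', hZ', c, hc⟩ :=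
    exists_homogeneous_subset_prod₃ (by simp) m (fun e => decide (e ∈ E)) hX hY hZ
  refine ⟨X', hX'X, Y', hY'Y, Z', hZ'Z, hX', hY', hZ', c, fun e he => ?_⟩
  obtain ⟨-, x, hx, y, hy, z, hz, rfl⟩ := mem_triples3.1 he
  exact hc x hx y hy z hz

end Hypergraph

section Family

variable {ι : Type*}

theorem exists_le_eq_at₃ {V : Type*} {A : ι → Finset V} {m : ℕ} (hA : ∀ r, m ≤ #(A r))
    {i j k : ι} {X Y Z : Finset V} (hX : X ⊆ A i ∧ m ≤ #X) (hY : Y ⊆ A j ∧ m ≤ #Y)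
    (hZ : Z ⊆ A k ∧ m ≤ #Z) (hij : i = j → X = Y) (hik : i = k → X = Z) (hjk : j = k → Y = Z) :
    ∃ B ≤ A, (∀ r, m ≤ #(B r)) ∧ B i = X ∧ B j = Y ∧ B k = Z := by
  refine ⟨fun r => if r = i then X else if r = j then Y else if r = k then Z else A r,
    fun r => ?_, fun r => ?_, ?_⟩
  · dsimp only
    split_ifs with h₁ h₂ h₃
    exacts [h₁ ▸ hX.1, h₂ ▸ hY.1, h₃ ▸ hZ.1, le_rfl]
  · dsimp only
    split_ifs
    exacts [hX.2, hY.2, hZ.2, hA r]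
  · dsimp only
    refine ⟨if_pos rfl, ?_, ?_⟩
    · by_cases h : j = i
      · rw [if_pos h, hij h.symm]
      · rw [if_neg h, if_pos rfl]
    · by_cases h₁ : k = i
      · rw [if_pos h₁, hik h₁.symm]
      · by_cases h₂ : k = j
        · rw [if_neg h₁, if_pos h₂, hjk h₂.symm]
        · rw [if_neg h₁, if_neg h₂, if_pos rfl]

theorem exists_isHomogeneous_at (i j k : ι) (m : ℕ) :
    ∃ N, ∀ n (E : Finset (Finset (Fin n))) (A : ι → Finset (Fin n)), (∀ r, N ≤ #(A r)) →
      ∃ B ≤ A, (∀ r, m ≤ #(B r)) ∧ IsHomogeneous E (B i) (B j) (B k) := by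
  refine ⟨ramseyBound 2 3 m ⊔ prodRamseyBound 2 2 m ⊔ prodRamseyBound₃ 2 m ⊔ m,
    fun n E A hA => ?_⟩
  have h₀ : ∀ r, m ≤ #(A r) := fun r => by have := hA r; omega
  have h₁ : ∀ r, ramseyBound 2 3 m ≤ #(A r) := fun r => by have := hA r; omega
  have h₂ : ∀ r, prodRamseyBound 2 2 m ≤ #(A r) := fun r => by have := hA r; omega
  have h₃ : ∀ r, prodRamseyBound₃ 2 m ≤ #(A r) := fun r => by have := hA r; omega
  suffices ∃ X ⊆ A i, ∃ Y ⊆ A j, ∃ Z ⊆ A k, m ≤ #X ∧ m ≤ #Y ∧ m ≤ #Z ∧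
      (i = j → X = Y) ∧ (i = k → X = Z) ∧ (j = k → Y = Z) ∧ IsHomogeneous E X Y Z by
    obtain ⟨X, hX, Y, hY, Z, hZ, hXm, hYm, hZm, hij, hik, hjk, hXYZ⟩ := this
    obtain ⟨B, hBA, hB, rfl, rfl, rfl⟩ :=
      exists_le_eq_at₃ h₀ ⟨hX, hXm⟩ ⟨hY, hYm⟩ ⟨hZ, hZm⟩ hij hik hjk
    exact ⟨B, hBA, hB, hXYZ⟩
  rcases eq_or_ne i j with rfl | hij
  · rcases eq_or_ne i k with rfl | hik
    · obtain ⟨X, hX, hXm, hXXX⟩ := exists_isHomogeneous_self (E := E) m (h₁ i)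
      exact ⟨X, hX, X, hX, X, hX, hXm, hXm, hXm, fun _ => rfl, fun _ => rfl, fun _ => rfl, hXXX⟩
    · obtain ⟨X, hX, Z, hZ, hXm, hZm, hXXZ⟩ := exists_isHomogeneous_pair (E := E) m (h₂ i) (h₂ k)
      exact ⟨X, hX, X, hX, Z, hZ, hXm, hXm, hZm, fun _ => rfl, (absurd · hik), (absurd · hik),
        hXXZ⟩
  · rcases eq_or_ne i k with rfl | hik
    · obtain ⟨X, hX, Y, hY, hXm, hYm, hXXY⟩ := exists_isHomogeneous_pair (E := E) m (h₂ i) (h₂ j)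
      exact ⟨X, hX, Y, hY, X, hX, hXm, hYm, hXm, (absurd · hij), fun _ => rfl,
        (absurd ·.symm hij), isHomogeneous_comm₂₃.1 hXXY⟩
    · rcases eq_or_ne j k with rfl | hjk
      · obtain ⟨Y, hY, X, hX, hYm, hXm, hYYX⟩ :=
          exists_isHomogeneous_pair (E := E) m (h₂ j) (h₂ i)
        exact ⟨X, hX, Y, hY, Y, hY, hXm, hYm, hYm, (absurd · hij), (absurd · hij), fun _ => rfl,
          isHomogeneous_comm₁₂.1 (isHomogeneous_comm₂₃.1 hYYX)⟩
      · obtain ⟨X, hX, Y, hY, Z, hZ, hXm, hYm, hZm, hXYZ⟩ :=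
          exists_isHomogeneous_triple (E := E) m (h₃ i) (h₃ j) (h₃ k)
        exact ⟨X, hX, Y, hY, Z, hZ, hXm, hYm, hZm, (absurd · hij), (absurd · hik), (absurd · hjk),
          hXYZ⟩

theorem exists_isHomogeneous_forall_mem (s : Finset (ι × ι × ι)) (m : ℕ) :
    ∃ N, ∀ n (E : Finset (Finset (Fin n))) (A : ι → Finset (Fin n)), (∀ r, N ≤ #(A r)) →
      ∃ B ≤ A, (∀ r, m ≤ #(B r)) ∧ ∀ p ∈ s, IsHomogeneous E (B p.1) (B p.2.1) (B p.2.2) := by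
  induction s using Finset.induction_on with
  | empty => exact ⟨m, fun n E A hA => ⟨A, le_rfl, hA, by simp⟩⟩
  | insert p s _ ih =>
    obtain ⟨N, hN⟩ := ih
    obtain ⟨N', hN'⟩ := exists_isHomogeneous_at p.1 p.2.1 p.2.2 N
    refine ⟨N', fun n E A hA => ?_⟩
    obtain ⟨B, hBA, hB, hBp⟩ := hN' n E A hA
    obtain ⟨C, hCB, hC, hCs⟩ := hN n E B hB
    exact ⟨C, hCB.trans hBA, hC,
      (forall_mem_insert _ _ _).2 ⟨hBp.mono (hCB _) (hCB _) (hCB _), hCs⟩⟩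

end Family

theorem stmt11 (ℓ P : ℕ) :
    ∃ Q : ℕ, ∀ n : ℕ, ∀ E : Finset (Finset (Fin n)), (∀ e ∈ E, e.card = 3) →
      ∀ A' : Fin ℓ → Finset (Fin n),
        (∀ i j, i ≠ j → Disjoint (A' i) (A' j)) →
        (∀ i, Q ≤ (A' i).card) →
        ∃ A : Fin ℓ → Finset (Fin n),
          (∀ i, A i ⊆ A' i) ∧ (∀ i, (A i).card = P) ∧
          ∀ i j k, dens3 n E (A i) (A j) (A k) = 0 ∨ dens3 n E (A i) (A j) (A k) = 1 := by
  obtain ⟨Q, hQ⟩ := exists_isHomogeneous_forall_mem (univ : Finset (Fin ℓ × Fin ℓ × Fin ℓ)) P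
  refine ⟨Q, fun n E _ A' _ hA' => ?_⟩
  obtain ⟨B, hBA', hB, hBhom⟩ := hQ n E A' hA'
  choose A hAB hA using fun i => exists_subset_card_eq (hB i)
  refine ⟨A, fun i => (hAB i).trans (hBA' i), hA, fun i j k => ?_⟩
  exact ((hBhom (i, j, k) (mem_univ _)).mono (hAB i) (hAB j) (hAB k)).dens3_eq_zero_or_one
end

section
/- Let t, n, m ≥ 1 be integers with m^{t−1} ≤ n, and let G be an n-vertex graph with no clique of size m. Then G has at least n^t / m^{t(t−1)} independent sets of size t. -/
/-!
Put `N = m ^ (t - 1)`. The Erdős–Szekeres recursion shows that any `N` vertices spanning no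
`m`-clique contain an independent `t`-set: pick a vertex `v`; either at least `(m - 1) ^ (t - 1)`
of the others are neighbours of `v`, and they span no `(m - 1)`-clique, or at least `m ^ (t - 2)`
are non-neighbours, and an independent `(t - 1)`-set among them extends by `v`.
Double counting the pairs (independent `t`-set `I`, `N`-set `W ⊇ I`) then bounds the number of
independent `t`-sets below by `C(n, N) / C(n - t, N - t) = C(n, t) / C(N, t) ≥ (n / N) ^ t`.
-/

open Finset

theorem Nat.pow_mul_descFactorial_le_pow_mul_descFactorial {N n : ℕ} (h : N ≤ n) (t : ℕ) :
    n ^ t * N.descFactorial t ≤ N ^ t * n.descFactorial t := by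
  induction t with
  | zero => simp
  | succ t ih =>
    have step : n * (N - t) ≤ N * (n - t) := by
      rw [Nat.mul_sub_left_distrib, Nat.mul_sub_left_distrib, Nat.mul_comm N n]
      exact Nat.sub_le_sub_left (Nat.mul_le_mul_right t h) _
    calc n ^ (t + 1) * N.descFactorial (t + 1)
        = n * (N - t) * (n ^ t * N.descFactorial t) := by
          rw [pow_succ, Nat.descFactorial_succ]; ring
      _ ≤ N * (n - t) * (N ^ t * n.descFactorial t) := Nat.mul_le_mul step ih
      _ = N ^ (t + 1) * n.descFactorial (t + 1) := by
          rw [pow_succ, Nat.descFactorial_succ]; ring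

theorem Nat.pow_mul_choose_le_pow_mul_choose {N n : ℕ} (h : N ≤ n) (t : ℕ) :
    n ^ t * N.choose t ≤ N ^ t * n.choose t := by
  have := Nat.pow_mul_descFactorial_le_pow_mul_descFactorial h t
  rw [Nat.descFactorial_eq_factorial_mul_choose, Nat.descFactorial_eq_factorial_mul_choose]
    at this
  refine Nat.le_of_mul_le_mul_left ?_ t.factorial_pos
  calc t.factorial * (n ^ t * N.choose t) = n ^ t * (t.factorial * N.choose t) := by ring
    _ ≤ N ^ t * (t.factorial * n.choose t) := this
    _ = t.factorial * (N ^ t * n.choose t) := by ring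

theorem Nat.pow_add_pow_succ_le_pow_succ (m t : ℕ) :
    (m + 1) ^ t + m ^ (t + 1) ≤ (m + 1) ^ (t + 1) :=
  calc (m + 1) ^ t + m ^ (t + 1) = (m + 1) ^ t + m * m ^ t := by ring
    _ ≤ (m + 1) ^ t + m * (m + 1) ^ t := by gcongr; omega
    _ = (m + 1) ^ (t + 1) := by ring

namespace Finset

variable {α : Type*} [DecidableEq α] {s : Finset α} {𝒜 : Finset (Finset α)} {t N : ℕ}

theorem choose_le_card_mul_choose_of_forall_exists_subset (h𝒜 : 𝒜 ⊆ s.powersetCard t)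
    (htN : t ≤ N) (hcover : ∀ W ∈ s.powersetCard N, ∃ A ∈ 𝒜, A ⊆ W) :
    (#s).choose N ≤ #𝒜 * (#s - t).choose (N - t) := by
  have := card_mul_le_card_mul (s := s.powersetCard N) (t := 𝒜) (fun W A => A ⊆ W)
    (m := 1) (n := (#s - t).choose (N - t))
    (fun W hW => by
      obtain ⟨A, hA, hAW⟩ := hcover W hW
      exact card_pos.2 ⟨A, (mem_bipartiteAbove _).2 ⟨hA, hAW⟩⟩)
    (fun A hA => by
      obtain ⟨hAs, hAt⟩ := mem_powersetCard.1 (h𝒜 hA)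
      rw [bipartiteBelow, card_filter_powersetCard_subset A s N hAs (hAt ▸ htN), hAt])
  simpa using this

theorem pow_le_pow_mul_card_of_forall_exists_subset (hN : N ≤ #s)
    (h𝒜 : 𝒜 ⊆ s.powersetCard t) (hcover : ∀ W ∈ s.powersetCard N, ∃ A ∈ 𝒜, A ⊆ W) :
    #s ^ t ≤ N ^ t * #𝒜 := by
  have htN : t ≤ N := by
    obtain ⟨W, hWs, hW⟩ := exists_subset_card_eq hN
    obtain ⟨A, hA, hAW⟩ := hcover W (mem_powersetCard.2 ⟨hWs, hW⟩)
    exact (mem_powersetCard.1 (h𝒜 hA)).2 ▸ hW ▸ card_le_card hAW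
  have hdouble := choose_le_card_mul_choose_of_forall_exists_subset h𝒜 htN hcover
  have hchoose : (#s).choose t ≤ #𝒜 * N.choose t := by
    refine Nat.le_of_mul_le_mul_right ?_ (Nat.choose_pos (Nat.sub_le_sub_right hN t))
    calc (#s).choose t * (#s - t).choose (N - t) = (#s).choose N * N.choose t :=
          (Nat.choose_mul htN).symm
      _ ≤ #𝒜 * (#s - t).choose (N - t) * N.choose t := Nat.mul_le_mul_right _ hdouble
      _ = #𝒜 * N.choose t * (#s - t).choose (N - t) := by ring
  refine Nat.le_of_mul_le_mul_right ?_ (Nat.choose_pos htN)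
  calc #s ^ t * N.choose t ≤ N ^ t * (#s).choose t := Nat.pow_mul_choose_le_pow_mul_choose hN t
    _ ≤ N ^ t * (#𝒜 * N.choose t) := Nat.mul_le_mul_left _ hchoose
    _ = N ^ t * #𝒜 * N.choose t := by ring

end Finset

namespace SimpleGraph

variable {V : Type*} (G : SimpleGraph V)

theorem exists_isNIndepSet_succ_of_cliqueFreeOn {m t : ℕ} {W : Finset V}
    (hW : G.CliqueFreeOn W m) (hcard : m ^ t ≤ #W) : ∃ S ⊆ W, G.IsNIndepSet (t + 1) S := by
  classical
  induction t generalizing m W with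
  | zero =>
    obtain ⟨v, hv⟩ : W.Nonempty := card_pos.1 (by simpa using hcard)
    exact ⟨{v}, singleton_subset_iff.2 hv, by simp [isNIndepSet_iff]⟩
  | succ t iht =>
    induction m generalizing W with
    | zero => exact absurd (isNClique_empty.2 rfl) (hW (by simp))
    | succ m ihm =>
      obtain ⟨v, hv⟩ : W.Nonempty := card_pos.1 (lt_of_lt_of_le (by positivity) hcard)
      set B := (W.erase v).filter (G.Adj v)
      set A := (W.erase v).filter (¬ G.Adj v ·)
      by_cases hB : m ^ (t + 1) ≤ #B
      · have hBfree : G.CliqueFreeOn B m := CliqueFreeOn.subset G (fun x hx => by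
          simp only [B, coe_filter, mem_erase] at hx
          exact ⟨hx.1.2, hx.2⟩) (CliqueFreeOn.of_succ G hW hv)
        obtain ⟨S, hSB, hS⟩ := ihm hBfree hB
        exact ⟨S, hSB.trans ((filter_subset _ _).trans (erase_subset _ _)), hS⟩
      · have hAB : #B + #A = #W - 1 := by
          rw [card_filter_add_card_filter_not, card_erase_of_mem hv]
        have hAfree : G.CliqueFreeOn A (m + 1) :=
          CliqueFreeOn.subset G (coe_subset.2 ((filter_subset _ _).trans (erase_subset _ _))) hW
        obtain ⟨S, hSA, hS⟩ := iht hAfree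
          (by have := Nat.pow_add_pow_succ_le_pow_succ m t; omega)
        have hvS : ∀ x ∈ S, v ≠ x ∧ ¬ G.Adj v x := fun x hx => by
          have := hSA hx
          simp only [A, mem_filter, mem_erase] at this
          exact ⟨this.1.1.symm, this.2⟩
        refine ⟨insert v S, insert_subset hv (hSA.trans ((filter_subset _ _).trans
          (erase_subset _ _))), ?_⟩
        rw [← isNClique_compl] at hS ⊢
        exact hS.insert fun x hx => (compl_adj G v x).2 (hvS x hx)

theorem exists_isNIndepSet_of_cliqueFreeOn {m t : ℕ} {W : Finset V}
    (hW : G.CliqueFreeOn W m) (hcard : m ^ (t - 1) ≤ #W) : ∃ S ⊆ W, G.IsNIndepSet t S := by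
  cases t with
  | zero => exact ⟨∅, empty_subset _, by simp [isNIndepSet_iff]⟩
  | succ t => exact G.exists_isNIndepSet_succ_of_cliqueFreeOn hW hcard

end SimpleGraph

theorem stmt13_general (t n m : ℕ)
    (hmn : m ^ (t - 1) ≤ n) (G : SimpleGraph (Fin n)) [DecidableRel G.Adj]
    (hG : G.CliqueFree m) :
    (n : ℝ) ^ t / (m : ℝ) ^ (t * (t - 1)) ≤
      (((Finset.powersetCard t (Finset.univ : Finset (Fin n))).filter
        (fun S => ∀ x ∈ S, ∀ y ∈ S, ¬ G.Adj x y)).card : ℝ) := by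
  set 𝒜 := (powersetCard t (univ : Finset (Fin n))).filter
    (fun S => ∀ x ∈ S, ∀ y ∈ S, ¬ G.Adj x y)
  have hcover : ∀ W ∈ (univ : Finset (Fin n)).powersetCard (m ^ (t - 1)), ∃ A ∈ 𝒜, A ⊆ W := by
    intro W hW
    obtain ⟨S, hSW, hS⟩ := G.exists_isNIndepSet_of_cliqueFreeOn hG.cliqueFreeOn
      (mem_powersetCard.1 hW).2.ge
    refine ⟨S, mem_filter.2 ⟨mem_powersetCard.2 ⟨subset_univ S, hS.card_eq⟩, ?_⟩, hSW⟩
    intro x hx y hy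
    obtain rfl | hxy := eq_or_ne x y
    · exact G.irrefl
    · exact hS.isIndepSet hx hy hxy
  have hcount := pow_le_pow_mul_card_of_forall_exists_subset (by simpa using hmn)
    (filter_subset _ _) hcover
  have hm : (m : ℝ) ≠ 0 := by
    rintro h
    simp [Nat.cast_eq_zero.1 h] at hG
  rw [div_le_iff₀ (by positivity), mul_comm t, pow_mul]
  simpa [mul_comm] using (Nat.cast_le (α := ℝ)).2 hcount

theorem stmt13 (t n m : ℕ) (ht : 1 ≤ t) (hn : 1 ≤ n) (hm : 1 ≤ m)
    (hmn : m ^ (t - 1) ≤ n) (G : SimpleGraph (Fin n)) [DecidableRel G.Adj]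
    (hG : G.CliqueFree m) :
    (n : ℝ) ^ t / (m : ℝ) ^ (t * (t - 1)) ≤
      (((Finset.powersetCard t (Finset.univ : Finset (Fin n))).filter
        (fun S => ∀ x ∈ S, ∀ y ∈ S, ¬ G.Adj x y)).card : ℝ) :=
  stmt13_general t n m hmn G hG
end

section
/- For every integer t ≥ 1 and every γ > 0, there is δ > 0 such that the following holds: if G is an n-vertex graph, with n sufficiently large, with average degree at least n^{1−δ} and with no clique of size at least n^δ, then G contains at least n^{2t−γ} induced copies of K_{t,t}, i.e., at least n^{2t−γ} pairs (A,B) of disjoint t-element vertex sets such that A and B are independent sets and every vertex of A is adjacent to every vertex of B. -/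
/-!
Put `u = n ^ δ` and `s = ⌈u⌉`, so that `G` has no `s`-clique. Growing a maximal clique shows that
every `s ^ t` vertices contain an independent `t`-set, and double counting then shows that any
vertex set `U` contains at least `(#U / s ^ t) ^ t - 1` independent `t`-sets.

Apply this, together with the power-mean inequality, to the neighbourhoods `N(v)`: counting the
pairs `(v, A)` with `A ⊆ N(v)` independent the other way round, the common neighbourhoods `N(A)` of
the independent `t`-sets `A` have total size at least `n ^ (t + 1) / u ^ O(t²)`. Apply it again to
the sets `N(A)`: an independent `t`-set `B ⊆ N(A)` is exactly the other side of an induced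
`K_{t,t}` on `A`, which gives `n ^ (2t) / u ^ O(t³)` of them. Every loss is a power of `u`, so
`δ = min γ 1 / (2t³ + 3t² + t + 1)` works.
-/

open Finset

theorem Nat.descFactorial_mul_pow_le_descFactorial_mul_pow {a b : ℕ} (hab : a ≤ b) :
    ∀ t : ℕ, a.descFactorial t * b ^ t ≤ b.descFactorial t * a ^ t
  | 0 => by simp
  | t + 1 => by
    have hstep : (a - t) * b ≤ (b - t) * a := by
      rw [Nat.sub_mul, Nat.sub_mul, mul_comm b a]
      exact Nat.sub_le_sub_left (Nat.mul_le_mul_left t hab) _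
    calc a.descFactorial (t + 1) * b ^ (t + 1)
        = ((a - t) * b) * (a.descFactorial t * b ^ t) := by rw [Nat.descFactorial_succ]; ring
      _ ≤ ((b - t) * a) * (b.descFactorial t * a ^ t) :=
        Nat.mul_le_mul hstep (Nat.descFactorial_mul_pow_le_descFactorial_mul_pow hab t)
      _ = b.descFactorial (t + 1) * a ^ (t + 1) := by rw [Nat.descFactorial_succ]; ring

-- `(n / u ^ c / u ^ (2 * t)) ^ t = u * (n ^ t / u ^ (t * (c + 2 * t) + 1))`, and since `u ≥ 2`
-- the extra factor `u` pays for the `- 1`.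
theorem pow_div_pow_le_div_pow_sub_one {n u x F : ℝ} {t c : ℕ} (hn : 0 ≤ n) (hu : 2 ≤ u)
    (hx : n / u ^ c ≤ x) (hF : 0 < F) (hFu : F ≤ u ^ (2 * t))
    (hnu : u ^ (t * (c + 2 * t) + 1) ≤ n ^ t) :
    n ^ t / u ^ (t * (c + 2 * t) + 1) ≤ (x / F) ^ t - 1 := by
  have hu0 : 0 < u := by linarith
  have hw : 1 ≤ n ^ t / u ^ (t * (c + 2 * t) + 1) := (one_le_div (by positivity)).2 hnu
  have hbase : n / u ^ (c + 2 * t) ≤ x / F := calc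
    n / u ^ (c + 2 * t) = n / u ^ c / u ^ (2 * t) := by rw [pow_add, div_div]
    _ ≤ x / F := div_le_div₀ ((div_nonneg hn (by positivity)).trans hx) hx hF hFu
  have : u * (n ^ t / u ^ (t * (c + 2 * t) + 1)) ≤ (x / F) ^ t := calc
    u * (n ^ t / u ^ (t * (c + 2 * t) + 1)) = (n / u ^ (c + 2 * t)) ^ t := by
      rw [pow_succ, div_pow, ← pow_mul, mul_comm (c + 2 * t) t]
      field_simp
    _ ≤ (x / F) ^ t := by gcongr
  nlinarith

namespace SimpleGraph

variable {V : Type*} {G : SimpleGraph V} {s : ℕ}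

lemma IsClique.card_lt_of_cliqueFree {C : Finset V} (hC : G.IsClique (C : Set V))
    (hG : G.CliqueFree s) : #C < s := by
  by_contra! h
  obtain ⟨D, hDC, hD⟩ := exists_subset_card_eq h
  exact hG D ⟨hC.subset (coe_subset.2 hDC), hD⟩

theorem cliqueFree_ceil_of_not_exists {u : ℝ}
    (h : ¬ ∃ S : Finset V, u ≤ #S ∧ ∀ x ∈ S, ∀ y ∈ S, x ≠ y → G.Adj x y) : G.CliqueFree ⌈u⌉₊ :=
  fun S hS => h ⟨S, hS.card_eq ▸ Nat.le_ceil u, fun _ hx _ hy hxy => hS.isClique hx hy hxy⟩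

variable [DecidableEq V] [DecidableRel G.Adj]

variable (G) in
lemma exists_isClique_forall_exists_not_adj (U : Finset V) :
    ∃ C ⊆ U, G.IsClique (C : Set V) ∧ ∀ v ∈ U \ C, ∃ c ∈ C, ¬ G.Adj c v := by
  obtain ⟨C, hC, hmax⟩ :=
    exists_max_image (U.powerset.filter fun C : Finset V => G.IsClique (C : Set V)) card
      ⟨∅, by simp⟩
  rw [mem_filter, mem_powerset] at hC
  refine ⟨C, hC.1, hC.2, fun v hv => ?_⟩
  rw [mem_sdiff] at hv
  by_contra! hadj
  have hins := hmax (insert v C) <| mem_filter.2 ⟨mem_powerset.2 (insert_subset hv.1 hC.1),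
    by rw [coe_insert]; exact hC.2.insert fun c hc _ => (hadj c hc).symm⟩
  rw [card_insert_of_notMem hv.2] at hins
  omega

theorem exists_isNIndepSet_subset_of_cliqueFree (hG : G.CliqueFree s) :
    ∀ (t : ℕ) {U : Finset V}, s ^ t ≤ #U → ∃ A ⊆ U, G.IsNIndepSet t A
  | 0, _, _ => ⟨∅, empty_subset _, by simp [isNIndepSet_iff]⟩
  | t + 1, U, hU => by
    obtain ⟨C, hCU, hC, hCmax⟩ := G.exists_isClique_forall_exists_not_adj U
    have hCs := hC.card_lt_of_cliqueFree hG
    -- the non-neighbourhoods of the fewer than `s` vertices of `C` cover `U \ C`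
    obtain ⟨c, hc, hcard⟩ : ∃ c ∈ C, s ^ t ≤ #{v ∈ U \ C | ¬ G.Adj c v} := by
      by_contra! hsmall
      have hcover : U ⊆ C ∪ C.biUnion fun c => {v ∈ U \ C | ¬ G.Adj c v} := by
        intro v hv
        by_cases hvC : v ∈ C
        · exact mem_union_left _ hvC
        · obtain ⟨c, hc, hcv⟩ := hCmax v (mem_sdiff.2 ⟨hv, hvC⟩)
          exact mem_union_right _ <|
            mem_biUnion.2 ⟨c, hc, mem_filter.2 ⟨mem_sdiff.2 ⟨hv, hvC⟩, hcv⟩⟩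
      have : #U < s ^ (t + 1) := calc
        #U ≤ #C + ∑ c ∈ C, #{v ∈ U \ C | ¬ G.Adj c v} :=
          (card_le_card hcover).trans <|
            (card_union_le _ _).trans (by gcongr; exact card_biUnion_le)
        _ = ∑ c ∈ C, (#{v ∈ U \ C | ¬ G.Adj c v} + 1) := by
          rw [sum_add_distrib, card_eq_sum_ones C, add_comm]
        _ ≤ ∑ _c ∈ C, s ^ t := sum_le_sum hsmall
        _ = #C * s ^ t := by rw [sum_const, smul_eq_mul]
        _ < s ^ (t + 1) := by
          rw [pow_succ']
          exact Nat.mul_lt_mul_of_pos_right hCs (pow_pos (by omega) t)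
      omega
    obtain ⟨A, hAM, hA⟩ := exists_isNIndepSet_subset_of_cliqueFree hG t hcard
    refine ⟨insert c A,
      insert_subset (hCU hc) (hAM.trans ((filter_subset _ _).trans sdiff_subset)), ?_⟩
    rw [← isNClique_compl] at hA ⊢
    refine hA.insert fun a ha => ?_
    obtain ⟨haU, hca⟩ := mem_filter.1 (hAM ha)
    exact (compl_adj G c a).2 ⟨by rintro rfl; exact (mem_sdiff.1 haU).2 hc, hca⟩

variable [Fintype V] {t : ℕ}

theorem card_pow_le_card_indepSets_mul (hG : G.CliqueFree s) {U : Finset V} (hU : s ^ t ≤ #U) :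
    #U ^ t ≤ #{A ∈ G.indepSetFinset t | A ⊆ U} * (s ^ t) ^ t := by
  set F := s ^ t
  set I := {A ∈ G.indepSetFinset t | A ⊆ U}
  have htF : t ≤ F := by
    obtain ⟨P, -, hP⟩ := exists_subset_card_eq hU
    obtain ⟨A, hAP, hA⟩ := exists_isNIndepSet_subset_of_cliqueFree hG t hP.ge
    exact hA.card_eq ▸ hP ▸ card_le_card hAP
  have hcount : (#U).choose F * 1 ≤ #I * (#U - t).choose (F - t) := by
    rw [← card_powersetCard]
    refine card_mul_le_card_mul (fun P A => A ⊆ P) (fun P hP => ?_) (fun A hA => ?_)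
    · obtain ⟨hPU, hPF⟩ := mem_powersetCard.1 hP
      obtain ⟨A, hAP, hA⟩ := exists_isNIndepSet_subset_of_cliqueFree hG t hPF.ge
      exact card_pos.2 ⟨A, (mem_bipartiteAbove _).2
        ⟨mem_filter.2 ⟨mem_indepSetFinset_iff.2 hA, hAP.trans hPU⟩, hAP⟩⟩
    · obtain ⟨hA, hAU⟩ := mem_filter.1 hA
      have hAt := (mem_indepSetFinset_iff.1 hA).card_eq
      rw [bipartiteBelow, card_filter_powersetCard_subset _ _ _ hAU (hAt ▸ htF), hAt]
  have hchoose : (#U).choose t ≤ #I * F.choose t := by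
    refine Nat.le_of_mul_le_mul_right (c := (#U - t).choose (F - t)) ?_
      (Nat.choose_pos (by omega))
    calc (#U).choose t * (#U - t).choose (F - t) = (#U).choose F * F.choose t :=
          (Nat.choose_mul htF).symm
      _ ≤ #I * (#U - t).choose (F - t) * F.choose t := by
        simpa using Nat.mul_le_mul_right _ hcount
      _ = #I * F.choose t * (#U - t).choose (F - t) := by ring
  have hdesc := Nat.descFactorial_mul_pow_le_descFactorial_mul_pow hU t
  simp only [Nat.descFactorial_eq_factorial_mul_choose] at hdesc
  refine le_of_mul_le_mul_left ?_ (Nat.mul_pos t.factorial_pos (Nat.choose_pos htF))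
  calc t.factorial * F.choose t * #U ^ t ≤ t.factorial * (#U).choose t * F ^ t := hdesc
    _ ≤ t.factorial * (#I * F.choose t) * F ^ t := by gcongr
    _ = t.factorial * F.choose t * (#I * F ^ t) := by ring

theorem card_pow_le_card_indepSets_add_one_mul (hG : G.CliqueFree s) (t : ℕ) (U : Finset V) :
    #U ^ t ≤ (#{A ∈ G.indepSetFinset t | A ⊆ U} + 1) * (s ^ t) ^ t := by
  rcases lt_or_ge #U (s ^ t) with hU | hU
  · exact (Nat.pow_le_pow_left hU.le t).trans (Nat.le_mul_of_pos_left _ (Nat.succ_pos _))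
  · exact (card_pow_le_card_indepSets_mul hG hU).trans (Nat.mul_le_mul_right _ (Nat.le_succ _))

theorem sum_card_pow_le_of_cliqueFree {ι : Type*} (hG : G.CliqueFree s) (ht : t ≠ 0)
    (𝒳 : Finset ι) (X : ι → Finset V) :
    (∑ i ∈ 𝒳, #(X i)) ^ t ≤
      #𝒳 ^ (t - 1) * ((∑ i ∈ 𝒳, #{A ∈ G.indepSetFinset t | A ⊆ X i} + #𝒳) * (s ^ t) ^ t) := by
  obtain ⟨k, rfl⟩ : ∃ k, t = k + 1 := ⟨t - 1, by omega⟩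
  calc (∑ i ∈ 𝒳, #(X i)) ^ (k + 1) ≤ #𝒳 ^ k * ∑ i ∈ 𝒳, #(X i) ^ (k + 1) :=
        pow_sum_le_card_mul_sum_pow (fun _ _ => Nat.zero_le _) k
    _ ≤ _ := by
      rw [Nat.add_sub_cancel, card_eq_sum_ones 𝒳, ← sum_add_distrib, sum_mul]
      gcongr with i
      exact card_pow_le_card_indepSets_add_one_mul hG _ _

theorem mul_pow_div_sub_one_le_sum_card {ι : Type*} (hG : G.CliqueFree s) (ht : t ≠ 0)
    (𝒳 : Finset ι) (X : ι → Finset V) {N x : ℝ} (hN : #𝒳 ≤ N) (hx : 0 ≤ x)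
    (hsum : N * x ≤ ∑ i ∈ 𝒳, (#(X i) : ℝ)) :
    N * ((x / (s : ℝ) ^ t) ^ t - 1) ≤ ∑ i ∈ 𝒳, (#{A ∈ G.indepSetFinset t | A ⊆ X i} : ℝ) := by
  obtain ⟨k, rfl⟩ : ∃ k, t = k + 1 := ⟨t - 1, by omega⟩
  set J := ∑ i ∈ 𝒳, (#{A ∈ G.indepSetFinset (k + 1) | A ⊆ X i} : ℝ)
  have hs : (0 : ℝ) < (s : ℝ) ^ (k + 1) :=
    pow_pos (Nat.cast_pos.2 (Nat.pos_of_ne_zero fun h => not_cliqueFree_zero (h ▸ hG))) _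
  have hN0 : 0 ≤ N := (Nat.cast_nonneg _).trans hN
  have hJ : 0 ≤ J := sum_nonneg fun _ _ => Nat.cast_nonneg _
  have hpow :
      N ^ k * (N * x ^ (k + 1)) ≤ N ^ k * ((J + N) * ((s : ℝ) ^ (k + 1)) ^ (k + 1)) := calc
    N ^ k * (N * x ^ (k + 1)) = (N * x) ^ (k + 1) := by ring
    _ ≤ (∑ i ∈ 𝒳, (#(X i) : ℝ)) ^ (k + 1) := by gcongr
    _ ≤ (#𝒳 : ℝ) ^ k * ((J + #𝒳) * ((s : ℝ) ^ (k + 1)) ^ (k + 1)) := by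
      have := sum_card_pow_le_of_cliqueFree hG ht 𝒳 X
      rw [Nat.add_sub_cancel] at this
      simp only [J]
      exact_mod_cast this
    _ ≤ N ^ k * ((J + N) * ((s : ℝ) ^ (k + 1)) ^ (k + 1)) := by gcongr
  rcases hN0.eq_or_lt with rfl | hNpos
  · simpa using hJ
  have := le_of_mul_le_mul_left hpow (pow_pos hNpos k)
  rw [div_pow, mul_sub, mul_one, mul_div_assoc', sub_le_iff_le_add, div_le_iff₀ (by positivity)]
  linarith

variable (G) in
def commonNeighborFinset (A : Finset V) : Finset V := {v | ∀ a ∈ A, G.Adj a v}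

variable (G) in
/-- The vertex classes `(A, B)` of the induced copies of `K_{t,t}`. -/
def inducedBicliqueFinset (t : ℕ) : Finset (Finset V × Finset V) :=
  {p ∈ G.indepSetFinset t ×ˢ G.indepSetFinset t | ∀ a ∈ p.1, ∀ b ∈ p.2, G.Adj a b}

theorem card_inducedBicliqueFinset :
    #(G.inducedBicliqueFinset t) =
      ∑ A ∈ G.indepSetFinset t, #{B ∈ G.indepSetFinset t | B ⊆ G.commonNeighborFinset A} := by
  rw [inducedBicliqueFinset, card_filter, sum_product]
  refine sum_congr rfl fun A _ => ?_
  rw [card_filter]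
  refine sum_congr rfl fun B _ => if_congr ?_ rfl rfl
  simp only [commonNeighborFinset, subset_iff, mem_filter, mem_univ, true_and]
  exact ⟨fun h b hb a ha => h a ha b hb, fun h a ha b hb => h hb a ha⟩

theorem sum_card_commonNeighborFinset :
    ∑ A ∈ G.indepSetFinset t, #(G.commonNeighborFinset A) =
      ∑ v, #{A ∈ G.indepSetFinset t | A ⊆ G.neighborFinset v} := by
  have := sum_card_bipartiteAbove_eq_sum_card_bipartiteBelow (fun A v => ∀ a ∈ A, G.Adj a v)
    (s := G.indepSetFinset t) (t := univ)
  refine this.trans (sum_congr rfl fun v _ => congrArg card (filter_congr fun A _ => ?_))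
  simp only [subset_iff, mem_neighborFinset, G.adj_comm]

variable (G) in
theorem card_indepSetFinset_le (t : ℕ) : #(G.indepSetFinset t) ≤ Fintype.card V ^ t := calc
  #(G.indepSetFinset t) ≤ #(powersetCard t (univ : Finset V)) :=
    card_le_card fun A hA =>
      mem_powersetCard.2 ⟨subset_univ A, (mem_indepSetFinset_iff.1 hA).card_eq⟩
  _ ≤ Fintype.card V ^ t := by rw [card_powersetCard, card_univ]; exact Nat.choose_le_pow _ _

theorem pow_div_le_card_inducedBicliqueFinset {u : ℝ} (ht : t ≠ 0) (hG : G.CliqueFree s)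
    (hu : 2 ≤ u) (hs : (s : ℝ) ≤ u ^ 2)
    (hdeg : (Fintype.card V : ℝ) ^ 2 ≤ u * ∑ v, (G.degree v : ℝ))
    (hn : u ^ (2 * t ^ 3 + 3 * t ^ 2 + t + 1) ≤ (Fintype.card V : ℝ) ^ t) :
    (Fintype.card V : ℝ) ^ (2 * t) / u ^ (2 * t ^ 3 + 3 * t ^ 2 + t + 1) ≤
      #(G.inducedBicliqueFinset t) := by
  set n : ℝ := (Fintype.card V : ℝ)
  set e := t * (1 + 2 * t) + 1
  have hM : 2 * t ^ 3 + 3 * t ^ 2 + t + 1 = t * (e + 2 * t) + 1 := by ring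
  have hn0 : 0 ≤ n := Nat.cast_nonneg _
  have hF0 : (0 : ℝ) < (s : ℝ) ^ t :=
    pow_pos (Nat.cast_pos.2 (Nat.pos_of_ne_zero fun h => not_cliqueFree_zero (h ▸ hG))) t
  have hF : (s : ℝ) ^ t ≤ u ^ (2 * t) := by rw [pow_mul]; gcongr
  have hne : u ^ e ≤ n ^ t := by
    refine (pow_le_pow_right₀ (by linarith) ?_).trans hn
    rw [hM]
    nlinarith [Nat.pos_of_ne_zero ht]
  -- first round, over the neighbourhoods of all vertices
  have hS : n * (n ^ t / u ^ e) ≤ ∑ A ∈ G.indepSetFinset t, (#(G.commonNeighborFinset A) : ℝ) := by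
    have hround := mul_pow_div_sub_one_le_sum_card hG ht univ (fun v => G.neighborFinset v)
      (N := n) (x := n / u) (by simp [n]) (by positivity) (by
        rw [← mul_div_assoc, ← sq, div_le_iff₀' (by positivity)]
        simpa [card_neighborFinset_eq_degree] using hdeg)
    rw [← Nat.cast_sum, ← sum_card_commonNeighborFinset, Nat.cast_sum] at hround
    refine le_trans (mul_le_mul_of_nonneg_left ?_ hn0) hround
    exact pow_div_pow_le_div_pow_sub_one (c := 1) hn0 hu (by rw [pow_one]) hF0 hF hne
  -- second round, over the common neighbourhoods of the independent `t`-sets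
  have hround := mul_pow_div_sub_one_le_sum_card hG ht (G.indepSetFinset t) G.commonNeighborFinset
    (N := n ^ t) (x := n / u ^ e) (by simp only [n]; exact_mod_cast G.card_indepSetFinset_le t)
    (by positivity) ((mul_div_left_comm _ _ _).trans_le hS)
  rw [hM, card_inducedBicliqueFinset, Nat.cast_sum]
  calc n ^ (2 * t) / u ^ (t * (e + 2 * t) + 1) = n ^ t * (n ^ t / u ^ (t * (e + 2 * t) + 1)) := by
        ring
    _ ≤ n ^ t * ((n / u ^ e / (s : ℝ) ^ t) ^ t - 1) := by
        gcongr
        exact pow_div_pow_le_div_pow_sub_one hn0 hu le_rfl hF0 hF (hM ▸ hn)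
    _ ≤ _ := hround

theorem mem_indepSetFinset_iff_forall_not_adj {C : Finset V} :
    C ∈ G.indepSetFinset t ↔ C ∈ powersetCard t univ ∧ ∀ x ∈ C, ∀ y ∈ C, ¬ G.Adj x y := by
  rw [mem_indepSetFinset_iff, isNIndepSet_iff, mem_powersetCard, and_comm]
  refine and_congr (by simp) ⟨fun h x hx y hy hxy => h hx hy (G.ne_of_adj hxy) hxy,
    fun h x hx y hy _ => h x hx y hy⟩

theorem mem_inducedBicliqueFinset {p : Finset V × Finset V} :
    p ∈ G.inducedBicliqueFinset t ↔
      (p.1 ∈ powersetCard t univ ∧ p.2 ∈ powersetCard t univ) ∧ Disjoint p.1 p.2 ∧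
        (∀ x ∈ p.1, ∀ y ∈ p.1, ¬ G.Adj x y) ∧ (∀ x ∈ p.2, ∀ y ∈ p.2, ¬ G.Adj x y) ∧
        ∀ x ∈ p.1, ∀ y ∈ p.2, G.Adj x y := by
  simp only [inducedBicliqueFinset, mem_filter, mem_product, mem_indepSetFinset_iff_forall_not_adj]
  constructor
  · rintro ⟨⟨⟨hA, hAi⟩, hB, hBi⟩, hadj⟩
    exact ⟨⟨hA, hB⟩, Finset.disjoint_left.2 fun x hxA hxB => G.irrefl (hadj x hxA x hxB),
      hAi, hBi, hadj⟩
  · rintro ⟨⟨hA, hB⟩, -, hAi, hBi, hadj⟩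
    exact ⟨⟨⟨hA, hAi⟩, hB, hBi⟩, hadj⟩

theorem rpow_le_card_inducedBicliqueFinset {γ δ : ℝ} (ht : t ≠ 0)
    (hδγ : δ * ((2 * t ^ 3 + 3 * t ^ 2 + t + 1 : ℕ) : ℝ) ≤ γ)
    (hδ : δ * ((2 * t ^ 3 + 3 * t ^ 2 + t + 1 : ℕ) : ℝ) ≤ 1)
    (hu : 2 ≤ (Fintype.card V : ℝ) ^ δ)
    (hdeg : (Fintype.card V : ℝ) ^ (1 - δ) ≤ (∑ v, (G.degree v : ℝ)) / Fintype.card V)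
    (hclique : ¬ ∃ S : Finset V, (Fintype.card V : ℝ) ^ δ ≤ #S ∧
      ∀ x ∈ S, ∀ y ∈ S, x ≠ y → G.Adj x y) :
    (Fintype.card V : ℝ) ^ (2 * (t : ℝ) - γ) ≤ #(G.inducedBicliqueFinset t) := by
  set n : ℝ := (Fintype.card V : ℝ)
  set u := n ^ δ
  set M := 2 * t ^ 3 + 3 * t ^ 2 + t + 1
  have hn1 : 1 ≤ n := Nat.one_le_cast.2 <| Nat.pos_of_ne_zero fun h0 => by
    simp only [u, n, h0, Nat.cast_zero] at hu
    linarith [Real.zero_rpow_le_one δ]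
  have hn0 : 0 < n := by linarith
  have huM : u ^ M = n ^ (δ * M) := (Real.rpow_mul_natCast hn0.le δ M).symm
  have hs : (⌈u⌉₊ : ℝ) ≤ u ^ 2 := (Nat.ceil_lt_add_one (by linarith)).le.trans (by nlinarith)
  have hdeg' : n ^ 2 ≤ u * ∑ v, (G.degree v : ℝ) := by
    rw [Real.rpow_sub hn0, Real.rpow_one, div_le_div_iff₀ (by positivity) hn0] at hdeg
    nlinarith
  have hsmall : u ^ M ≤ n ^ t := calc
    u ^ M = n ^ (δ * M) := huM
    _ ≤ n ^ (1 : ℝ) := Real.rpow_le_rpow_of_exponent_le hn1 hδ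
    _ ≤ n ^ t := by rw [Real.rpow_one]; exact le_self_pow₀ hn1 ht
  calc n ^ (2 * (t : ℝ) - γ) ≤ n ^ (2 * (t : ℝ) - δ * M) :=
        Real.rpow_le_rpow_of_exponent_le hn1 (by linarith)
    _ = n ^ (2 * t) / u ^ M := by
        rw [huM, Real.rpow_sub hn0, ← Real.rpow_natCast]
        push_cast
        ring_nf
    _ ≤ _ := pow_div_le_card_inducedBicliqueFinset ht (cliqueFree_ceil_of_not_exists hclique) hu hs
        hdeg' hsmall

end SimpleGraph

theorem stmt14 (t : ℕ) (ht : 1 ≤ t) (γ : ℝ) (hγ : 0 < γ) :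
    ∃ δ : ℝ, 0 < δ ∧
      ∃ n₀ : ℕ, ∀ n : ℕ, n₀ ≤ n →
        ∀ (G : SimpleGraph (Fin n)) [DecidableRel G.Adj],
          (n : ℝ) ^ ((1 : ℝ) - δ) ≤ (∑ v : Fin n, (G.degree v : ℝ)) / (n : ℝ) →
          (¬ ∃ S : Finset (Fin n), (n : ℝ) ^ δ ≤ (S.card : ℝ) ∧
            ∀ x ∈ S, ∀ y ∈ S, x ≠ y → G.Adj x y) →
          (n : ℝ) ^ (2 * (t : ℝ) - γ) ≤
            ((((Finset.powersetCard t (Finset.univ : Finset (Fin n))) ×ˢ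
               (Finset.powersetCard t (Finset.univ : Finset (Fin n)))).filter
              (fun p => Disjoint p.1 p.2 ∧
                (∀ x ∈ p.1, ∀ y ∈ p.1, ¬ G.Adj x y) ∧
                (∀ x ∈ p.2, ∀ y ∈ p.2, ¬ G.Adj x y) ∧
                (∀ x ∈ p.1, ∀ y ∈ p.2, G.Adj x y))).card : ℝ) := by
  set M := 2 * t ^ 3 + 3 * t ^ 2 + t + 1
  have hM : (0 : ℝ) < M := by positivity
  set δ : ℝ := min γ 1 / M
  have hδ : 0 < δ := div_pos (lt_min hγ one_pos) hM
  have hδM : δ * M = min γ 1 := div_mul_cancel₀ _ hM.ne'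
  obtain ⟨n₀, hn₀⟩ := Filter.eventually_atTop.1 <|
    ((tendsto_rpow_atTop hδ).comp tendsto_natCast_atTop_atTop).eventually_ge_atTop (2 : ℝ)
  refine ⟨δ, hδ, n₀, fun n hn G _ hdeg hclique => ?_⟩
  have h := G.rpow_le_card_inducedBicliqueFinset (γ := γ) (δ := δ) (Nat.one_le_iff_ne_zero.1 ht)
    (hδM ▸ min_le_left γ 1) (hδM ▸ min_le_right γ 1) (by simpa using hn₀ n hn)
    (by simpa only [Fintype.card_fin] using hdeg) (by simpa only [Fintype.card_fin] using hclique)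
  rw [Fintype.card_fin] at h
  refine h.trans (by gcongr; exact fun p hp => mem_filter.2 <|
    (SimpleGraph.mem_inducedBicliqueFinset.1 hp).imp_left mem_product.2)
end

section
/- Let s ≥ 1 be an integer and θ ∈ (0,1), and let G be an n-vertex 3-graph, with n sufficiently large, which contains fewer than n^{s+1−θ} induced stars of size s. Then G contains a vertex subset U with |U| ≥ n^{θ/(2s)} such that the induced subgraph G[U] contains no induced star of size s. -/
/-! Alteration method. Put `ε = θ / (2s)` and `t = 2⌈n^ε⌉`. A uniformly random `t`-subset of the
vertices contains a fixed induced star (an `(s+1)`-set) with probability at most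
`(t / (n - s))^(s+1)`, so some `t`-set `U` contains at most `n^(s+1-θ) (t / (n - s))^(s+1) ≤ n^ε`
of them. Deleting the centre of each of these stars from `U` leaves at least `t - n^ε ≥ n^ε`
vertices spanning no induced star of size `s`. -/

open Classical

/-- `(v,S)` is a star in the 3-graph with edge set `E`: every pair of distinct vertices
of `S` forms an edge together with `v`. -/
def IsStar3 {n : ℕ} (E : Finset (Finset (Fin n))) (v : Fin n) (S : Finset (Fin n)) : Prop :=
  v ∉ S ∧ ∀ x ∈ S, ∀ y ∈ S, x ≠ y → ({v, x, y} : Finset (Fin n)) ∈ E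

/-- `(v,S)` is an induced star: a star such that `S` spans no edges. -/
def IsInducedStar3 {n : ℕ} (E : Finset (Finset (Fin n))) (v : Fin n)
    (S : Finset (Fin n)) : Prop :=
  IsStar3 E v S ∧ ∀ e ∈ E, ¬ e ⊆ S

/-- `(v,S)` is an antistar: a star in the complement 3-graph. -/
def IsAntiStar3 {n : ℕ} (E : Finset (Finset (Fin n))) (v : Fin n)
    (S : Finset (Fin n)) : Prop :=
  v ∉ S ∧ ∀ x ∈ S, ∀ y ∈ S, x ≠ y → ({v, x, y} : Finset (Fin n)) ∉ E

/-- `(v,S)` is an induced antistar: an induced star in the complement 3-graph. -/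
def IsInducedAntiStar3 {n : ℕ} (E : Finset (Finset (Fin n))) (v : Fin n)
    (S : Finset (Fin n)) : Prop :=
  IsAntiStar3 E v S ∧ ∀ e : Finset (Fin n), e ⊆ S → e.card = 3 → e ∈ E

open Finset Filter Real

theorem Nat.mul_pow_le_mul_pow_of_mul_choose_le {a b n k t : ℕ}
    (h : b * n.choose k ≤ a * t.choose k) : b * (n + 1 - k) ^ k ≤ a * t ^ k := by
  have hdesc : b * n.descFactorial k ≤ a * t.descFactorial k := by
    simp only [Nat.descFactorial_eq_factorial_mul_choose, mul_left_comm _ k.factorial]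
    exact Nat.mul_le_mul_left _ h
  calc b * (n + 1 - k) ^ k ≤ b * n.descFactorial k :=
        Nat.mul_le_mul_left _ (Nat.pow_sub_le_descFactorial n k)
    _ ≤ a * t.descFactorial k := hdesc
    _ ≤ a * t ^ k := Nat.mul_le_mul_left _ (Nat.descFactorial_le_pow t k)

section Alteration

variable {α β : Type*} [Fintype α] [DecidableEq α] {k t : ℕ}

theorem exists_card_eq_card_filter_subset_mul_choose_le (F : Finset β) (f : β → Finset α)
    (hf : ∀ p ∈ F, #(f p) = k) (hkt : k ≤ t) (htn : t ≤ Fintype.card α) :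
    ∃ U : Finset α, #U = t ∧
      #{p ∈ F | f p ⊆ U} * (Fintype.card α).choose k ≤ #F * t.choose k := by
  set n := Fintype.card α
  set T := (univ : Finset α).powersetCard t
  have hdouble : ∑ U ∈ T, #{p ∈ F | f p ⊆ U} = #F * (n - k).choose (t - k) := by
    refine (sum_card_bipartiteAbove_eq_sum_card_bipartiteBelow
      (r := fun p U => f p ⊆ U)).symm.trans ?_
    rw [← smul_eq_mul, ← sum_const]
    refine sum_congr rfl fun p hp => ?_
    rw [bipartiteAbove, card_filter_powersetCard_subset _ _ _ (subset_univ _) (hf p hp ▸ hkt),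
      hf p hp, card_univ]
  have hT : T.Nonempty := powersetCard_nonempty.2 (by simpa using htn)
  obtain ⟨U, hU, hle⟩ :
      ∃ U ∈ T, #{p ∈ F | f p ⊆ U} * n.choose t ≤ #F * (n - k).choose (t - k) := by
    refine exists_le_of_sum_le hT ?_
    rw [← sum_mul, hdouble, sum_const, card_powersetCard, card_univ, smul_eq_mul, mul_comm]
  refine ⟨U, (mem_powersetCard.1 hU).2, Nat.le_of_mul_le_mul_right ?_
    (Nat.choose_pos (Nat.sub_le_sub_right htn k))⟩
  calc #{p ∈ F | f p ⊆ U} * n.choose k * (n - k).choose (t - k)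
      = #{p ∈ F | f p ⊆ U} * n.choose t * t.choose k := by
        rw [mul_assoc, mul_assoc, Nat.choose_mul hkt]
    _ ≤ #F * (n - k).choose (t - k) * t.choose k := Nat.mul_le_mul_right _ hle
    _ = #F * t.choose k * (n - k).choose (t - k) := by ring

theorem exists_forall_not_subset_and_mul_pow_le (F : Finset β) (f : β → Finset α) (c : β → α)
    (hc : ∀ p ∈ F, c p ∈ f p) (hf : ∀ p ∈ F, #(f p) = k) (hkt : k ≤ t)
    (htn : t ≤ Fintype.card α) :
    ∃ U : Finset α, (∀ p ∈ F, ¬ f p ⊆ U) ∧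
      t * (Fintype.card α + 1 - k) ^ k ≤ #U * (Fintype.card α + 1 - k) ^ k + #F * t ^ k := by
  obtain ⟨U, hU, hbad⟩ := exists_card_eq_card_filter_subset_mul_choose_le F f hf hkt htn
  set B := {p ∈ F | f p ⊆ U}
  refine ⟨U \ B.image c, fun p hp hsub => ?_, ?_⟩
  · have hpB : p ∈ B := mem_filter.2 ⟨hp, hsub.trans sdiff_subset⟩
    exact (mem_sdiff.1 (hsub (hc p hp))).2 (mem_image_of_mem c hpB)
  · have hcard : t ≤ #(U \ B.image c) + #B :=
      hU ▸ card_le_card_sdiff_add_card.trans (Nat.add_le_add_left card_image_le _)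
    calc t * (Fintype.card α + 1 - k) ^ k
        ≤ (#(U \ B.image c) + #B) * (Fintype.card α + 1 - k) ^ k := Nat.mul_le_mul_right _ hcard
      _ ≤ _ := by
        rw [add_mul]
        exact Nat.add_le_add_left (Nat.mul_pow_le_mul_pow_of_mul_choose_le hbad) _

end Alteration

theorem eventually_le_natCast_rpow {a : ℝ} (ha : 0 < a) (c : ℝ) :
    ∀ᶠ n : ℕ in atTop, c ≤ (n : ℝ) ^ a :=
  ((tendsto_rpow_atTop ha).comp tendsto_natCast_atTop_atTop).eventually_ge_atTop c

theorem rpow_mul_four_mul_rpow_pow_le {x ε θ : ℝ} {k : ℕ} (hx : 0 < x)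
    (hεk : ε * k = θ / 2 + ε) (h8 : (8 : ℝ) ^ k ≤ x ^ (θ / 2)) :
    x ^ ((k : ℝ) - θ) * (4 * x ^ ε) ^ k ≤ x ^ ε * (x / 2) ^ k := by
  have hsplit : x ^ ε * x ^ (k : ℝ) = x ^ (θ / 2) * (x ^ ((k : ℝ) - θ) * x ^ (ε * k)) := by
    rw [← rpow_add hx, ← rpow_add hx, ← rpow_add hx, hεk]
    ring_nf
  rw [mul_pow, ← rpow_natCast (x ^ ε), ← rpow_mul hx.le, div_pow, ← rpow_natCast x k,
    mul_div_assoc', le_div_iff₀ (by positivity), hsplit]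
  calc x ^ ((k : ℝ) - θ) * (4 ^ k * x ^ (ε * k)) * 2 ^ k
      = 8 ^ k * (x ^ ((k : ℝ) - θ) * x ^ (ε * k)) := by
        rw [show (8 : ℝ) = 4 * 2 by norm_num, mul_pow]
        ring
    _ ≤ _ := by gcongr

theorem eventually_two_mul_natCeil_rpow_bounds {s : ℕ} {ε θ : ℝ} (hθ0 : 0 < θ) (hε1 : ε < 1)
    (hθ : θ = 2 * s * ε) :
    ∀ᶠ n : ℕ in atTop, s + 1 ≤ 2 * ⌈(n : ℝ) ^ ε⌉₊ ∧ 2 * ⌈(n : ℝ) ^ ε⌉₊ ≤ n ∧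
      (n : ℝ) ^ ((s : ℝ) + 1 - θ) * ((2 * ⌈(n : ℝ) ^ ε⌉₊ : ℕ) : ℝ) ^ (s + 1) ≤
        (n : ℝ) ^ ε * ((n - s : ℕ) : ℝ) ^ (s + 1) := by
  have hε0 : 0 < ε := by nlinarith [s.cast_nonneg (α := ℝ)]
  filter_upwards [eventually_le_natCast_rpow hε0 (s + 1),
    eventually_le_natCast_rpow (sub_pos.2 hε1) 4,
    eventually_le_natCast_rpow (a := θ / 2) (by positivity) (8 ^ (s + 1)),
    eventually_ge_atTop (2 * s), eventually_gt_atTop 0] with n hs1 h4 h8 h2s hn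
  have hx : 0 < (n : ℝ) := Nat.cast_pos.2 hn
  have hceil : (n : ℝ) ^ ε ≤ ⌈(n : ℝ) ^ ε⌉₊ := Nat.le_ceil _
  have htwo : 2 * (⌈(n : ℝ) ^ ε⌉₊ : ℝ) ≤ 4 * (n : ℝ) ^ ε := by
    linarith [Nat.ceil_lt_add_one (rpow_nonneg hx.le ε)]
  have hfour : 4 * (n : ℝ) ^ ε ≤ n := by
    calc 4 * (n : ℝ) ^ ε ≤ (n : ℝ) ^ (1 - ε) * (n : ℝ) ^ ε := by gcongr
      _ = n := by rw [← rpow_add hx, sub_add_cancel, rpow_one]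
  refine ⟨?_, ?_, ?_⟩
  · exact_mod_cast (show ((s + 1 : ℕ) : ℝ) ≤ 2 * ⌈(n : ℝ) ^ ε⌉₊ by push_cast; linarith)
  · exact_mod_cast (show ((2 * ⌈(n : ℝ) ^ ε⌉₊ : ℕ) : ℝ) ≤ n by push_cast; linarith)
  · have hhalf : (n : ℝ) / 2 ≤ ((n - s : ℕ) : ℝ) := by
      rw [Nat.cast_sub (by omega)]
      have : ((2 * s : ℕ) : ℝ) ≤ n := by exact_mod_cast h2s
      push_cast at this
      linarith
    have key := rpow_mul_four_mul_rpow_pow_le (ε := ε) (θ := θ) (k := s + 1) hx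
      (by push_cast; rw [hθ]; ring) (by exact_mod_cast h8)
    push_cast at key ⊢
    calc (n : ℝ) ^ ((s : ℝ) + 1 - θ) * (2 * ⌈(n : ℝ) ^ ε⌉₊) ^ (s + 1)
        ≤ (n : ℝ) ^ ((s : ℝ) + 1 - θ) * (4 * (n : ℝ) ^ ε) ^ (s + 1) := by gcongr
      _ ≤ (n : ℝ) ^ ε * ((n : ℝ) / 2) ^ (s + 1) := key
      _ ≤ _ := by gcongr

theorem stmt16 (s : ℕ) (hs : 1 ≤ s) (θ : ℝ) (hθ0 : 0 < θ) (hθ1 : θ < 1) :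
    ∃ n₀ : ℕ, ∀ n : ℕ, n₀ ≤ n →
      ∀ E : Finset (Finset (Fin n)), (∀ e ∈ E, e.card = 3) →
        ((((Finset.univ ×ˢ Finset.powersetCard s (Finset.univ : Finset (Fin n))).filter
            (fun p => IsInducedStar3 E p.1 p.2)).card : ℝ) < (n : ℝ) ^ ((s : ℝ) + 1 - θ)) →
        ∃ U : Finset (Fin n), (n : ℝ) ^ (θ / (2 * (s : ℝ))) ≤ (U.card : ℝ) ∧
          ¬ ∃ v ∈ U, ∃ S ⊆ U, S.card = s ∧ IsInducedStar3 E v S := by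
  set ε := θ / (2 * (s : ℝ))
  have hε1 : ε < 1 := by
    rw [div_lt_one (by positivity)]
    linarith [show (1 : ℝ) ≤ s by exact_mod_cast hs]
  obtain ⟨n₀, hn₀⟩ := eventually_atTop.1 (eventually_two_mul_natCeil_rpow_bounds (s := s) hθ0 hε1
    (by simp only [ε]; field_simp))
  refine ⟨n₀, fun n hn E _ hP => ?_⟩
  obtain ⟨hkt, htn, hpow⟩ := hn₀ n hn
  set P := (univ ×ˢ powersetCard s (univ : Finset (Fin n))).filter
    (fun p => IsInducedStar3 E p.1 p.2)
  obtain ⟨U, hfree, hU⟩ := exists_forall_not_subset_and_mul_pow_le P (fun p => insert p.1 p.2)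
    Prod.fst (fun p _ => mem_insert_self _ _) (fun p hp => by
      simp only [P, mem_filter, mem_product, mem_powersetCard] at hp
      rw [card_insert_of_notMem hp.2.1.1, hp.1.2.2]) hkt (by simpa using htn)
  refine ⟨U, ?_, fun ⟨v, hv, S, hS, hcard, hstar⟩ =>
    hfree (v, S) (by simp [P, hcard, hstar]) (insert_subset hv hS)⟩
  rw [Fintype.card_fin, Nat.add_sub_add_right] at hU
  set t := 2 * ⌈(n : ℝ) ^ ε⌉₊
  set X : ℝ := ((n - s : ℕ) : ℝ) ^ (s + 1)
  have hX : 0 < X := pow_pos (Nat.cast_pos.2 (Nat.sub_pos_of_lt (by omega))) _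
  have hcover : (t : ℝ) ≤ #U + (n : ℝ) ^ ε := by
    refine le_of_mul_le_mul_right ?_ hX
    calc (t : ℝ) * X ≤ #U * X + (#P : ℝ) * (t : ℝ) ^ (s + 1) := by
          simp only [X]
          exact_mod_cast hU
      _ ≤ #U * X + (n : ℝ) ^ ((s : ℝ) + 1 - θ) * (t : ℝ) ^ (s + 1) := by gcongr
      _ ≤ (#U + (n : ℝ) ^ ε) * X := by rw [add_mul]; gcongr
  push_cast [t] at hcover
  linarith [Nat.le_ceil ((n : ℝ) ^ ε)]
end
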